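/- arXiv:math/0409551 — 7 statements merged into one kernel-verified Lean document; each statement's English description precedes it below -/
import Mathlib

section
/- A right R-module M is RD-flat if and only if its character module M^♭ = Hom_ℤ(M, ℚ/ℤ) is an RD-injective left R-module. -/
universe u

open MulOpposite

section RDDefs

variable (R : Type u) [Ring R]

/-- `IsTensorZero R M N l` encodes the statement `∑ mᵢ ⊗ nᵢ = 0` in the tensor product
`M ⊗_R N` of the right `R`-module `M` with the left `R`-module `N`, via the universal
property of the tensor product: every `R`-balanced biadditive map kills the sum. -/
def IsTensorZero (M N : Type u) [AddCommGroup M] [Module Rᵐᵒᵖ M]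
    [AddCommGroup N] [Module R N] (l : List (M × N)) : Prop :=
  ∀ (A : Type u) [AddCommGroup A], ∀ b : M → N → A,
    (∀ m₁ m₂ n, b (m₁ + m₂) n = b m₁ n + b m₂ n) →
    (∀ m n₁ n₂, b m (n₁ + n₂) = b m n₁ + b m n₂) →
    (∀ (r : R) (m : M) (n : N), b (op r • m) n = b m (r • n)) →
    (l.map fun p => b p.1 p.2).sum = 0

/-- A right `R`-module `M` is RD-flat if tensoring with `M` preserves exactness of all
RD-exact sequences of left `R`-modules; equivalently, for every injective linear map
`f : H → F` of left `R`-modules whose image is a relatively divisible submodule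
(`rF ∩ f(H) = r f(H)` for all `r`), the induced map `M ⊗ H → M ⊗ F` is injective. -/
def RDFlat (M : Type u) [AddCommGroup M] [Module Rᵐᵒᵖ M] : Prop :=
  ∀ (H F : Type u) [AddCommGroup H] [Module R H] [AddCommGroup F] [Module R F],
    ∀ f : H →ₗ[R] F, Function.Injective f →
    (∀ (r : R) (h : H) (y : F), f h = r • y → ∃ h' : H, h = r • h') →
    ∀ l : List (M × H),
      IsTensorZero R M F (l.map fun p => (p.1, f p.2)) → IsTensorZero R M H l

/-- A right `R`-module `N` is RD-injective if every homomorphism into `N` from a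
relatively divisible submodule of a right `R`-module extends to the whole module. -/
def RDInjective (N : Type u) [AddCommGroup N] [Module Rᵐᵒᵖ N] : Prop :=
  ∀ (K L : Type u) [AddCommGroup K] [Module Rᵐᵒᵖ K] [AddCommGroup L] [Module Rᵐᵒᵖ L],
    ∀ f : K →ₗ[Rᵐᵒᵖ] L, Function.Injective f →
    (∀ (r : R) (k : K) (y : L), f k = op r • y → ∃ k' : K, k = op r • k') →
    ∀ g : K →ₗ[Rᵐᵒᵖ] N, ∃ h : L →ₗ[Rᵐᵒᵖ] N, h.comp f = g

/-- An injective linear map `f : K → L` of right `R`-modules is pure if every finite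
system of linear equations `∑ⱼ xⱼ aᵢⱼ = kᵢ` with constants in `K` which is solvable
in `L` is solvable in `K`. -/
def IsPure {K L : Type u} [AddCommGroup K] [Module Rᵐᵒᵖ K] [AddCommGroup L]
    [Module Rᵐᵒᵖ L] (f : K →ₗ[Rᵐᵒᵖ] L) : Prop :=
  ∀ (m n : ℕ) (a : Fin m → Fin n → R) (k : Fin m → K),
    (∃ x : Fin n → L, ∀ i, (∑ j, op (a i j) • x j) = f (k i)) →
    ∃ y : Fin n → K, ∀ i, (∑ j, op (a i j) • y j) = k i

/-- A right `R`-module `M` is RD-coflat if every RD-exact sequence `0 → M → P → Q → 0`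
is pure-exact, i.e. whenever `M` embeds as a relatively divisible submodule of a right
module `P`, it is a pure submodule of `P`. -/
def RDCoflat (M : Type u) [AddCommGroup M] [Module Rᵐᵒᵖ M] : Prop :=
  ∀ (P : Type u) [AddCommGroup P] [Module Rᵐᵒᵖ P],
    ∀ f : M →ₗ[Rᵐᵒᵖ] P, Function.Injective f →
    (∀ (r : R) (x : M) (y : P), f x = op r • y → ∃ x' : M, x = op r • x') →
    IsPure R f

/-- A right `R`-module `N` is pure-injective if every homomorphism into `N` from a pure
submodule of a right `R`-module extends to the whole module. -/
def PureInjective (N : Type u) [AddCommGroup N] [Module Rᵐᵒᵖ N] : Prop :=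
  ∀ (K L : Type u) [AddCommGroup K] [Module Rᵐᵒᵖ K] [AddCommGroup L] [Module Rᵐᵒᵖ L],
    ∀ f : K →ₗ[Rᵐᵒᵖ] L, Function.Injective f → IsPure R f →
    ∀ g : K →ₗ[Rᵐᵒᵖ] N, ∃ h : L →ₗ[Rᵐᵒᵖ] N, h.comp f = g

/-- A right `R`-module `F` is pure-projective if every homomorphism from `F` to a
quotient in a pure-exact sequence lifts. -/
def PureProjective (F : Type u) [AddCommGroup F] [Module Rᵐᵒᵖ F] : Prop :=
  ∀ (L Q : Type u) [AddCommGroup L] [Module Rᵐᵒᵖ L] [AddCommGroup Q] [Module Rᵐᵒᵖ Q],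
    ∀ p : L →ₗ[Rᵐᵒᵖ] Q, Function.Surjective p → IsPure R (LinearMap.ker p).subtype →
    ∀ g : F →ₗ[Rᵐᵒᵖ] Q, ∃ h : F →ₗ[Rᵐᵒᵖ] L, p.comp h = g

/-- A right `R`-module `F` is RD-projective if every homomorphism from `F` to a
quotient in an RD-exact sequence (the kernel is a relatively divisible submodule)
lifts. -/
def RDProjective (F : Type u) [AddCommGroup F] [Module Rᵐᵒᵖ F] : Prop :=
  ∀ (L Q : Type u) [AddCommGroup L] [Module Rᵐᵒᵖ L] [AddCommGroup Q] [Module Rᵐᵒᵖ Q],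
    ∀ p : L →ₗ[Rᵐᵒᵖ] Q, Function.Surjective p →
    (∀ (r : R) (x : L), p x = 0 → (∃ y : L, x = op r • y) →
      ∃ z : L, p z = 0 ∧ x = op r • z) →
    ∀ g : F →ₗ[Rᵐᵒᵖ] Q, ∃ h : F →ₗ[Rᵐᵒᵖ] L, p.comp h = g

end RDDefs

section RDDefsLeft

variable (R : Type u) [Ring R]

/-- A left `R`-module `N` is RD-injective if every homomorphism into `N` from a
relatively divisible submodule of a left `R`-module extends to the whole module. -/
def RDInjectiveL (N : Type u) [AddCommGroup N] [Module R N] : Prop :=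
  ∀ (K L : Type u) [AddCommGroup K] [Module R K] [AddCommGroup L] [Module R L],
    ∀ f : K →ₗ[R] L, Function.Injective f →
    (∀ (r : R) (k : K) (y : L), f k = r • y → ∃ k' : K, k = r • k') →
    ∀ g : K →ₗ[R] N, ∃ h : L →ₗ[R] N, h.comp f = g

/-- An injective linear map `f : K → L` of left `R`-modules is pure if every finite
system of linear equations `∑ⱼ aᵢⱼ xⱼ = kᵢ` with constants in `K` which is solvable
in `L` is solvable in `K`. -/
def IsPureL {K L : Type u} [AddCommGroup K] [Module R K] [AddCommGroup L]
    [Module R L] (f : K →ₗ[R] L) : Prop :=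
  ∀ (m n : ℕ) (a : Fin m → Fin n → R) (k : Fin m → K),
    (∃ x : Fin n → L, ∀ i, (∑ j, a i j • x j) = f (k i)) →
    ∃ y : Fin n → K, ∀ i, (∑ j, a i j • y j) = k i

/-- A left `R`-module `M` is RD-coflat if every RD-exact sequence `0 → M → P → Q → 0`
is pure-exact, i.e. whenever `M` embeds as a relatively divisible submodule of a left
module `P`, it is a pure submodule of `P`. -/
def RDCoflatL (M : Type u) [AddCommGroup M] [Module R M] : Prop :=
  ∀ (P : Type u) [AddCommGroup P] [Module R P],
    ∀ f : M →ₗ[R] P, Function.Injective f →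
    (∀ (r : R) (x : M) (y : P), f x = r • y → ∃ x' : M, x = r • x') →
    IsPureL R f

/-- A left `R`-module `N` is pure-injective if every homomorphism into `N` from a pure
submodule of a left `R`-module extends to the whole module. -/
def PureInjectiveL (N : Type u) [AddCommGroup N] [Module R N] : Prop :=
  ∀ (K L : Type u) [AddCommGroup K] [Module R K] [AddCommGroup L] [Module R L],
    ∀ f : K →ₗ[R] L, Function.Injective f → IsPureL R f →
    ∀ g : K →ₗ[R] N, ∃ h : L →ₗ[R] N, h.comp f = g

end RDDefsLeft

section Character

variable (R : Type u) [Ring R] (M : Type u) [AddCommGroup M] [Module Rᵐᵒᵖ M]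

/-- The left `R`-action on the character module `M⋆ = Hom_ℤ(M, ℚ/ℤ)` of a right
`R`-module `M`, given by `(r • f) m = f (m r)`. -/
instance charSMul : SMul R (M →+ AddCircle (1 : ℚ)) :=
  ⟨fun r f => f.comp (AddMonoidHom.mk' (fun m => op r • m) fun a b => smul_add (op r) a b)⟩

@[simp] lemma char_smul_apply (r : R) (f : M →+ AddCircle (1 : ℚ)) (m : M) :
    (r • f) m = f (op r • m) := rfl

/-- The character module of a right `R`-module is a left `R`-module. -/
instance charModule : Module R (M →+ AddCircle (1 : ℚ)) where
  one_smul f := by ext m; simp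
  mul_smul r s f := by ext m; simp [op_mul, mul_smul]
  smul_zero r := by ext m; simp
  smul_add r f g := by ext m; simp
  add_smul r s f := by ext m; simp [op_add, add_smul]
  zero_smul f := by ext m; simp

end Character

/-!
For a right `R`-module `M` and a left `R`-module `N`, characters of `M ⊗_R N` are the same
as `R`-linear maps `N → M^♭`, naturally in `N`. Since `ℚ/ℤ` is an injective cogenerator of
abelian groups, `M ⊗ f` is injective exactly when its dual is surjective, i.e. when every
`R`-linear map `H → M^♭` extends along `f : H → F`. Letting `f` range over the RD-embeddings
gives the equivalence.
-/

open TensorProduct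

section BalancedTensor

variable (R : Type*) [Ring R] (M N : Type*) [AddCommGroup M] [Module Rᵐᵒᵖ M]
  [AddCommGroup N] [Module R N]

def balancedRel : Submodule ℤ (M ⊗[ℤ] N) :=
  Submodule.span ℤ {x | ∃ (r : R) (m : M) (n : N), x = (op r • m) ⊗ₜ n - m ⊗ₜ (r • n)}

/-- The tensor product `M ⊗_R N` of a right and a left `R`-module, as an abelian group. -/
abbrev BalancedTensor : Type _ := M ⊗[ℤ] N ⧸ balancedRel R M N

namespace BalancedTensor

noncomputable def mk : M →+ N →+ BalancedTensor R M N :=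
  LinearMap.toAddMonoidHom'.comp
    ((TensorProduct.mk ℤ M N).compr₂ (balancedRel R M N).mkQ).toAddMonoidHom

variable {R M N}

lemma mk_apply (m : M) (n : N) :
    mk R M N m n = Submodule.Quotient.mk (m ⊗ₜ n) := rfl

lemma mk_op_smul (r : R) (m : M) (n : N) : mk R M N (op r • m) n = mk R M N m (r • n) :=
  (Submodule.Quotient.eq _).mpr (Submodule.subset_span ⟨r, m, n, rfl⟩)

variable {A : Type*} [AddCommGroup A]

noncomputable def lift (b : M →+ N →+ A) (hb : ∀ (r : R) m n, b (op r • m) n = b m (r • n)) :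
    BalancedTensor R M N →+ A :=
  let b' : M ⊗[ℤ] N →ₗ[ℤ] A :=
    (liftAddHom b fun z m n => by
      rw [map_zsmul, AddMonoidHom.zsmul_apply, map_zsmul]).toIntLinearMap
  ((balancedRel R M N).liftQ b' <| Submodule.span_le.mpr <| by
    rintro _ ⟨r, m, n, rfl⟩
    simp [b', hb]).toAddMonoidHom

@[ext] lemma addMonoidHom_ext {f g : BalancedTensor R M N →+ A}
    (h : ∀ m n, f (mk R M N m n) = g (mk R M N m n)) : f = g :=
  AddMonoidHom.toIntLinearMap_injective <| Submodule.linearMap_qext _ <| TensorProduct.ext' h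

variable (R) in
noncomputable def ofList (l : List (M × N)) : BalancedTensor R M N :=
  (l.map fun p => mk R M N p.1 p.2).sum

lemma apply_ofList {G : Type*} [FunLike G (BalancedTensor R M N) A]
    [AddMonoidHomClass G (BalancedTensor R M N) A] (φ : G) (l : List (M × N)) :
    φ (ofList R l) = (l.map fun p => φ (mk R M N p.1 p.2)).sum := by
  rw [ofList, map_list_sum, List.map_map]
  rfl

lemma exists_ofList_eq (t : BalancedTensor R M N) : ∃ l : List (M × N), ofList R l = t := by
  obtain ⟨x, rfl⟩ := Submodule.Quotient.mk_surjective _ t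
  induction x using TensorProduct.induction_on with
  | zero => exact ⟨[], rfl⟩
  | tmul m n => exact ⟨[(m, n)], by simp [ofList, mk_apply]⟩
  | add x y hx hy =>
    obtain ⟨lx, hlx⟩ := hx
    obtain ⟨ly, hly⟩ := hy
    exact ⟨lx ++ ly, by simp [ofList, ← hlx, ← hly]⟩

variable {H F : Type*} [AddCommGroup H] [Module R H] [AddCommGroup F] [Module R F]

noncomputable def map (f : H →ₗ[R] F) : BalancedTensor R M H →ₗ[ℤ] BalancedTensor R M F :=
  (lift ((mk R M F).compl₂ f.toAddMonoidHom) fun r m h => by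
    simp [mk_op_smul]).toIntLinearMap

lemma map_ofList (f : H →ₗ[R] F) (l : List (M × H)) :
    map f (ofList R l) = ofList R (l.map fun p => (p.1, f p.2)) := by
  rw [map, AddMonoidHom.coe_toIntLinearMap, apply_ofList, ofList, List.map_map]
  rfl

lemma injective_iff_forall_ofList {X : Type*} [AddCommGroup X]
    (φ : BalancedTensor R M N →ₗ[ℤ] X) :
    Function.Injective φ ↔ ∀ l : List (M × N), φ (ofList R l) = 0 → ofList R l = 0 := by
  rw [injective_iff_map_eq_zero]
  refine ⟨fun h l => h _, fun h t => ?_⟩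
  obtain ⟨l, rfl⟩ := exists_ofList_eq t
  exact h l

end BalancedTensor

end BalancedTensor

section

variable {R M : Type u} [Ring R] [AddCommGroup M] [Module Rᵐᵒᵖ M]

open BalancedTensor

lemma isTensorZero_iff_ofList_eq_zero {N : Type u} [AddCommGroup N] [Module R N]
    (l : List (M × N)) :
    IsTensorZero R M N l ↔ ofList R l = 0 := by
  refine ⟨fun h => h _ (mk R M N · ·) (by simp) (by simp) mk_op_smul, ?_⟩
  intro h A _ b hb₁ hb₂ hb₃
  let B : M →+ N →+ A :=
    AddMonoidHom.mk' (fun m => AddMonoidHom.mk' (b m) (hb₂ m)) fun m₁ m₂ => by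
      ext n; exact hb₁ m₁ m₂ n
  have := congr(lift B hb₃ $h)
  rwa [apply_ofList, map_zero] at this

variable {N H F : Type*} [AddCommGroup N] [Module R N] [AddCommGroup H] [Module R H]
  [AddCommGroup F] [Module R F]

noncomputable def characterHomEquiv :
    CharacterModule (BalancedTensor R M N) ≃ (N →ₗ[R] (M →+ AddCircle (1 : ℚ))) where
  toFun χ :=
    { toFun n := AddMonoidHom.mk' (fun m => χ (mk R M N m n)) fun m₁ m₂ => by simp
      map_add' n₁ n₂ := by ext m; simp
      map_smul' r n := by ext m; simp [mk_op_smul] }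
  invFun g := lift g.toAddMonoidHom.flip fun r m n => by simp
  left_inv χ := addMonoidHom_ext fun m n => rfl
  right_inv g := rfl

lemma characterHomEquiv_dual_map (f : H →ₗ[R] F) (χ : CharacterModule (BalancedTensor R M F)) :
    characterHomEquiv (CharacterModule.dual (map f) χ) = (characterHomEquiv χ).comp f :=
  rfl

lemma injective_map_iff_forall_exists_comp_eq (f : H →ₗ[R] F) :
    Function.Injective (map (M := M) f) ↔
      ∀ g : H →ₗ[R] (M →+ AddCircle (1 : ℚ)), ∃ h : F →ₗ[R] (M →+ AddCircle (1 : ℚ)),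
        h.comp f = g := by
  rw [← CharacterModule.dual_surjective_iff_injective]
  constructor
  · intro hdual g
    obtain ⟨χ, hχ⟩ := hdual (characterHomEquiv.symm g)
    exact ⟨characterHomEquiv χ, by rw [← characterHomEquiv_dual_map, hχ, Equiv.apply_symm_apply]⟩
  · intro hext χ
    obtain ⟨h, hh⟩ := hext (characterHomEquiv χ)
    refine ⟨characterHomEquiv.symm h, characterHomEquiv.injective ?_⟩
    rw [characterHomEquiv_dual_map, Equiv.apply_symm_apply, hh]

lemma rdFlat_iff_forall_injective_map :
    RDFlat R M ↔ ∀ (H F : Type u) [AddCommGroup H] [Module R H] [AddCommGroup F] [Module R F]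
      (f : H →ₗ[R] F), Function.Injective f →
      (∀ (r : R) (h : H) (y : F), f h = r • y → ∃ h' : H, h = r • h') →
      Function.Injective (map (M := M) f) := by
  simp only [RDFlat, isTensorZero_iff_ofList_eq_zero, ← map_ofList, injective_iff_forall_ofList]

end

/-- A right `R`-module `M` is RD-flat if and only if its character module
`M^♭ = Hom_ℤ(M, ℚ/ℤ)` is an RD-injective left `R`-module. -/
theorem rdFlat_iff_character_rdInjective (R : Type u) [Ring R]
    (M : Type u) [AddCommGroup M] [Module Rᵐᵒᵖ M] :
    RDFlat R M ↔ RDInjectiveL R (M →+ AddCircle (1 : ℚ)) := by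
  simp only [rdFlat_iff_forall_injective_map, injective_map_iff_forall_exists_comp_eq]
  rfl
end

section
/- If R is commutative, a module M is RD-flat over R if and only if the localization M_P is RD-flat over R_P for every maximal ideal P of R. -/
universe u

open MulOpposite

section RDDefsComm

variable (R : Type u) [CommRing R]

/-- `IsTensorZeroC R M N l` encodes the statement `∑ mᵢ ⊗ nᵢ = 0` in `M ⊗_R N`
(modules over a commutative ring `R`), via the universal property of the tensor
product: every `R`-balanced biadditive map kills the sum. -/
def IsTensorZeroC (M N : Type u) [AddCommGroup M] [Module R M]
    [AddCommGroup N] [Module R N] (l : List (M × N)) : Prop :=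
  ∀ (A : Type u) [AddCommGroup A], ∀ b : M → N → A,
    (∀ m₁ m₂ n, b (m₁ + m₂) n = b m₁ n + b m₂ n) →
    (∀ m n₁ n₂, b m (n₁ + n₂) = b m n₁ + b m n₂) →
    (∀ (r : R) (m : M) (n : N), b (r • m) n = b m (r • n)) →
    (l.map fun p => b p.1 p.2).sum = 0

/-- An `R`-module `M` (over a commutative ring) is RD-flat if tensoring with `M`
preserves exactness of all RD-exact sequences; equivalently, for every injective
linear map `f : H → F` whose image is a relatively divisible submodule
(`rF ∩ f(H) = r f(H)` for all `r`), the induced map `M ⊗ H → M ⊗ F` is injective. -/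
def RDFlatC (M : Type u) [AddCommGroup M] [Module R M] : Prop :=
  ∀ (H F : Type u) [AddCommGroup H] [Module R H] [AddCommGroup F] [Module R F],
    ∀ f : H →ₗ[R] F, Function.Injective f →
    (∀ (r : R) (h : H) (y : F), f h = r • y → ∃ h' : H, h = r • h') →
    ∀ l : List (M × H),
      IsTensorZeroC R M F (l.map fun p => (p.1, f p.2)) → IsTensorZeroC R M H l

/-- An `R`-module `N` is RD-injective if every homomorphism into `N` from a
relatively divisible submodule of an `R`-module extends to the whole module. -/
def RDInjectiveC (N : Type u) [AddCommGroup N] [Module R N] : Prop :=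
  ∀ (K L : Type u) [AddCommGroup K] [Module R K] [AddCommGroup L] [Module R L],
    ∀ f : K →ₗ[R] L, Function.Injective f →
    (∀ (r : R) (k : K) (y : L), f k = r • y → ∃ k' : K, k = r • k') →
    ∀ g : K →ₗ[R] N, ∃ h : L →ₗ[R] N, h.comp f = g

/-- An injective linear map `f : K → L` of `R`-modules is pure if every finite
system of linear equations with constants in `K` which is solvable in `L` is
solvable in `K`. -/
def IsPureC {K L : Type u} [AddCommGroup K] [Module R K] [AddCommGroup L]
    [Module R L] (f : K →ₗ[R] L) : Prop :=
  ∀ (m n : ℕ) (a : Fin m → Fin n → R) (k : Fin m → K),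
    (∃ x : Fin n → L, ∀ i, (∑ j, a i j • x j) = f (k i)) →
    ∃ y : Fin n → K, ∀ i, (∑ j, a i j • y j) = k i

/-- An `R`-module `M` is RD-coflat if every RD-exact sequence `0 → M → P → Q → 0`
is pure-exact, i.e. whenever `M` embeds as a relatively divisible submodule of a
module `P`, it is a pure submodule of `P`. -/
def RDCoflatC (M : Type u) [AddCommGroup M] [Module R M] : Prop :=
  ∀ (P : Type u) [AddCommGroup P] [Module R P],
    ∀ f : M →ₗ[R] P, Function.Injective f →
    (∀ (r : R) (x : M) (y : P), f x = r • y → ∃ x' : M, x = r • x') →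
    IsPureC R f

/-- An `R`-module `F` is RD-projective if every homomorphism from `F` to a quotient
in an RD-exact sequence (the kernel is a relatively divisible submodule) lifts. -/
def RDProjectiveC (F : Type u) [AddCommGroup F] [Module R F] : Prop :=
  ∀ (L Q : Type u) [AddCommGroup L] [Module R L] [AddCommGroup Q] [Module R Q],
    ∀ p : L →ₗ[R] Q, Function.Surjective p →
    (∀ (r : R) (x : L), p x = 0 → (∃ y : L, x = r • y) →
      ∃ z : L, p z = 0 ∧ x = r • z) →
    ∀ g : F →ₗ[R] Q, ∃ h : F →ₗ[R] L, p.comp h = g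

end RDDefsComm

/-! RD-flatness of `M` means that `M ⊗ f` is injective for every RD-embedding `f`.
Localization preserves RD-embeddings, `M_P ⊗_{R_P} H_P` is the localization of `M ⊗_R H`
at `P`, and injectivity of a linear map is a local property at the maximal ideals: this gives
the backward direction. Conversely `M_P ≅ R_P ⊗_R M`, for `R_P`-modules `H` we have
`(R_P ⊗_R M) ⊗_{R_P} H ≅ M ⊗_R H`, and an RD-embedding over `R_P` stays one over `R`. -/

open TensorProduct

section RDEmbedding

variable {R : Type*} [CommSemiring R] {H F : Type*} [AddCommMonoid H] [Module R H]
  [AddCommMonoid F] [Module R F]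

def IsRDEmbedding (f : H →ₗ[R] F) : Prop :=
  Function.Injective f ∧ ∀ (r : R) (h : H) (y : F), f h = r • y → ∃ h' : H, h = r • h'

theorem IsRDEmbedding.restrictScalars {A : Type*} [CommSemiring A] [Algebra R A] [Module A H]
    [Module A F] [IsScalarTower R A H] [IsScalarTower R A F] {f : H →ₗ[A] F}
    (hf : IsRDEmbedding f) : IsRDEmbedding (f.restrictScalars R) := by
  refine ⟨hf.1, fun r h y hy => ?_⟩
  rw [← algebraMap_smul A] at hy
  obtain ⟨h', rfl⟩ := hf.2 _ h y hy
  exact ⟨h', algebraMap_smul A r h'⟩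

theorem IsRDEmbedding.localizedModuleMap (S : Submonoid R) {f : H →ₗ[R] F}
    (hf : IsRDEmbedding f) : IsRDEmbedding (LocalizedModule.map S f) := by
  refine ⟨LocalizedModule.map_injective S f hf.1, fun ρ x y => ?_⟩
  induction ρ using Localization.induction_on with | H rs => ?_
  induction x using LocalizedModule.induction_on with | h h u => ?_
  induction y using LocalizedModule.induction_on with | h y v => ?_
  obtain ⟨r, s⟩ := rs
  intro hxy
  rw [LocalizedModule.map_mk, LocalizedModule.mk_smul_mk, LocalizedModule.mk_eq] at hxy
  obtain ⟨c, hc⟩ := hxy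
  simp only [Submonoid.smul_def, Submonoid.coe_mul, smul_smul, ← map_smul] at hc
  have hdiv : f (((c : R) * ((s : R) * (v : R))) • h) = r • (((c : R) * (u : R)) • y) := by
    rw [hc, smul_smul]
    ring_nf
  obtain ⟨h', hh'⟩ := hf.2 r _ _ hdiv
  refine ⟨LocalizedModule.mk h' (c * v * u), ?_⟩
  rw [LocalizedModule.mk_smul_mk, ← hh', LocalizedModule.mk_eq]
  refine ⟨1, ?_⟩
  simp only [Submonoid.smul_def, Submonoid.coe_mul, smul_smul, OneMemClass.coe_one, one_mul]
  congr 1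
  ring

end RDEmbedding

section TensorLists

variable {R : Type u} [CommRing R] {M N : Type u} [AddCommGroup M] [Module R M]
  [AddCommGroup N] [Module R N]

theorem isTensorZeroC_iff (l : List (M × N)) :
    IsTensorZeroC R M N l ↔ (l.map fun p => p.1 ⊗ₜ[R] p.2).sum = 0 := by
  refine ⟨fun h => h (M ⊗[R] N) (· ⊗ₜ ·) add_tmul tmul_add smul_tmul, ?_⟩
  intro h A _ b hb₁ hb₂ hb₃
  let B : M →+ N →+ A := AddMonoidHom.mk' (fun m => AddMonoidHom.mk' (b m) (hb₂ m))
    fun m₁ m₂ => AddMonoidHom.ext (hb₁ m₁ m₂)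
  have hsum : (l.map fun p => b p.1 p.2) = (l.map fun p => p.1 ⊗ₜ[R] p.2).map
      (liftAddHom B hb₃) := by
    simp only [List.map_map, Function.comp_def]
    rfl
  rw [hsum, ← map_list_sum, h, map_zero]

theorem TensorProduct.exists_list_eq_sum_tmul (x : M ⊗[R] N) :
    ∃ l : List (M × N), x = (l.map fun p => p.1 ⊗ₜ[R] p.2).sum := by
  obtain ⟨s, rfl⟩ := TensorProduct.exists_multiset x
  obtain ⟨l, rfl⟩ := Quot.exists_rep s
  exact ⟨l, rfl⟩

end TensorLists

theorem rdFlatC_iff_lTensor_injective {R : Type u} [CommRing R] (M : Type u) [AddCommGroup M]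
    [Module R M] :
    RDFlatC R M ↔ ∀ (H F : Type u) [AddCommGroup H] [Module R H] [AddCommGroup F] [Module R F]
      (f : H →ₗ[R] F), IsRDEmbedding f → Function.Injective (f.lTensor M) := by
  have lTensor_sum : ∀ {H F : Type u} [AddCommGroup H] [Module R H] [AddCommGroup F] [Module R F]
      (f : H →ₗ[R] F) (l : List (M × H)), f.lTensor M (l.map fun p => p.1 ⊗ₜ[R] p.2).sum =
        ((l.map fun p => (p.1, f p.2)).map fun p => p.1 ⊗ₜ[R] p.2).sum := by
    intro H F _ _ _ _ f l
    simp [map_list_sum, List.map_map, Function.comp_def]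
  constructor
  · intro hM H F _ _ _ _ f hf
    refine (injective_iff_map_eq_zero _).mpr fun x hx => ?_
    obtain ⟨l, rfl⟩ := TensorProduct.exists_list_eq_sum_tmul x
    rw [lTensor_sum, ← isTensorZeroC_iff] at hx
    exact (isTensorZeroC_iff l).mp (hM H F f hf.1 hf.2 l hx)
  · intro hM H F _ _ _ _ f hinj hdiv l hl
    rw [isTensorZeroC_iff, ← lTensor_sum] at hl
    rw [isTensorZeroC_iff]
    exact (injective_iff_map_eq_zero _).mp (hM H F f ⟨hinj, hdiv⟩) _ hl

section BaseChange

variable {R : Type u} [CommRing R] {M : Type u} [AddCommGroup M] [Module R M]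

theorem RDFlatC.of_linearEquiv {N : Type u} [AddCommGroup N] [Module R N] (hM : RDFlatC R M)
    (e : M ≃ₗ[R] N) : RDFlatC R N := by
  rw [rdFlatC_iff_lTensor_injective] at hM ⊢
  intro H F _ _ _ _ f hf
  have square : f.lTensor N ∘ e.rTensor H = e.rTensor F ∘ f.lTensor M := by
    ext x
    induction x using TensorProduct.induction_on <;> simp_all
  rw [← Function.Injective.of_comp_iff' _ (e.rTensor H).bijective, square]
  exact (e.rTensor F).injective.comp (hM H F f hf)

theorem RDFlatC.baseChange (A : Type u) [CommRing A] [Algebra R A] (hM : RDFlatC R M) :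
    RDFlatC A (A ⊗[R] M) := by
  rw [rdFlatC_iff_lTensor_injective] at hM ⊢
  intro H F _ _ _ _ f hf
  let : Module R H := Module.compHom H (algebraMap R A)
  let : Module R F := Module.compHom F (algebraMap R A)
  have : IsScalarTower R A H := .of_algebraMap_smul fun _ _ => rfl
  have : IsScalarTower R A F := .of_algebraMap_smul fun _ _ => rfl
  let e : ∀ (K : Type u) [AddCommGroup K] [Module A K] [Module R K] [IsScalarTower R A K],
      (A ⊗[R] M) ⊗[A] K ≃ₗ[R] M ⊗[R] K := fun K _ _ _ _ =>
    (TensorProduct.comm A _ K ≪≫ₗ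
      AlgebraTensorModule.cancelBaseChange R A A K M).restrictScalars R ≪≫ₗ
      TensorProduct.comm R K M
  have square : e F ∘ f.lTensor _ = (f.restrictScalars R).lTensor M ∘ e H := by
    ext x
    induction x using TensorProduct.induction_on with
    | zero => simp
    | add x y hx hy => simp_all only [Function.comp_apply, map_add]
    | tmul am h =>
      induction am using TensorProduct.induction_on with
      | zero => simp
      | add x y hx hy => simp_all only [Function.comp_apply, add_tmul, map_add]
      | tmul a m => simp [e]
  rw [← (e F).injective.of_comp_iff, square]
  exact (hM H F _ hf.restrictScalars).comp (e H).injective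

end BaseChange

section Localization

variable {R : Type u} [CommRing R] {M : Type u} [AddCommGroup M] [Module R M] (S : Submonoid R)

open LocalizedModule

theorem RDFlatC.localizedModule (hM : RDFlatC R M) :
    RDFlatC (Localization S) (LocalizedModule S M) :=
  (hM.baseChange _).of_linearEquiv (LocalizedModule.equivTensorProduct S M).symm

theorem isLocalizedModuleMap_lTensor {H F : Type u} [AddCommGroup H] [Module R H] [AddCommGroup F]
    [Module R F] (f : H →ₗ[R] F) :
    IsLocalizedModule.map S (TensorProduct.map (mkLinearMap S M) (mkLinearMap S H))
        (TensorProduct.map (mkLinearMap S M) (mkLinearMap S F)) (f.lTensor M) =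
      ((map S f).restrictScalars R).lTensor (LocalizedModule S M) := by
  apply IsLocalizedModule.linearMap_ext S (TensorProduct.map (mkLinearMap S M) (mkLinearMap S H))
    (TensorProduct.map (mkLinearMap S M) (mkLinearMap S F))
  rw [IsLocalizedModule.map_comp]
  ext m h
  simp

theorem RDFlatC.injective_isLocalizedModuleMap_lTensor
    (hM : RDFlatC (Localization S) (LocalizedModule S M)) {H F : Type u} [AddCommGroup H]
    [Module R H] [AddCommGroup F] [Module R F] {f : H →ₗ[R] F} (hf : IsRDEmbedding f) :
    Function.Injective (IsLocalizedModule.map S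
      (TensorProduct.map (mkLinearMap S M) (mkLinearMap S H))
      (TensorProduct.map (mkLinearMap S M) (mkLinearMap S F)) (f.lTensor M)) := by
  rw [rdFlatC_iff_lTensor_injective] at hM
  let e : ∀ (K : Type u) [AddCommGroup K] [Module R K],
      LocalizedModule S M ⊗[Localization S] LocalizedModule S K ≃ₗ[R]
        LocalizedModule S M ⊗[R] LocalizedModule S K := fun K _ _ =>
    equivOfCompatibleSMul R (Localization S) R _ _
  -- over a localization of `R`, tensor products over `R` and over the localization agree
  have square : ((map S f).restrictScalars R).lTensor (LocalizedModule S M) ∘ e H =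
      e F ∘ (map S f).lTensor (LocalizedModule S M) := by
    ext x
    induction x using TensorProduct.induction_on with
    | zero => simp
    | tmul m h => rfl
    | add x y hx hy => simp_all only [Function.comp_apply, map_add]
  rw [isLocalizedModuleMap_lTensor, ← Function.Injective.of_comp_iff' _ (e H).bijective, square]
  exact (e F).injective.comp (hM _ _ _ (hf.localizedModuleMap S))

end Localization

/-- Over a commutative ring `R`, a module `M` is RD-flat if and only if the
localization `M_P` is RD-flat over `R_P` for every maximal ideal `P` of `R`. -/
theorem rdFlat_iff_localized_rdFlat (R : Type u) [CommRing R]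
    (M : Type u) [AddCommGroup M] [Module R M] :
    RDFlatC R M ↔
      ∀ (P : Ideal R) (hP : P.IsMaximal),
        letI := hP.isPrime
        RDFlatC (Localization.AtPrime P) (LocalizedModule P.primeCompl M) := by
  refine ⟨fun hM P _ => hM.localizedModule P.primeCompl, fun hloc => ?_⟩
  rw [rdFlatC_iff_lTensor_injective]
  intro H F _ _ _ _ f hf
  exact injective_of_isLocalized_maximal _
    (fun P _ => TensorProduct.map (LocalizedModule.mkLinearMap P.primeCompl M)
      (LocalizedModule.mkLinearMap P.primeCompl H)) _
    (fun P _ => TensorProduct.map (LocalizedModule.mkLinearMap P.primeCompl M)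
      (LocalizedModule.mkLinearMap P.primeCompl F)) _
    fun P hP => (hloc P hP).injective_isLocalizedModuleMap_lTensor _ hf
end

section
/- Every pure submodule of an RD-coflat right R-module is RD-coflat, and arbitrary direct products and direct sums of RD-coflat right R-modules are RD-coflat. -/
universe u

open MulOpposite

/-!
Relatively divisible embeddings are stable under pushout. Hence, if `M → P` is an RD-embedding
and `g : M → N` is any map into an RD-coflat module, a linear system with constants in `M`
that is solvable in `P` becomes, after applying `g`, solvable in the pushout of `P`, in which
`N` sits as an RD-submodule, and therefore solvable in `N`. For a pure submodule `M ⊆ N` this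
gives solvability in `M`; for products and direct sums apply it to the projections and assemble
the componentwise solutions, which for direct sums may be restricted to the finitely many
components where the constants are nonzero.
-/

open Function LinearMap

section Solvability

variable (R : Type*) [Ring R] {m n : ℕ}

/-- `IsPure R f` unfolds to `∀ m n a k, HasSolution R a (f ∘ k) → HasSolution R a k`. -/
def HasSolution {L : Type*} [AddCommGroup L] [Module Rᵐᵒᵖ L]
    (a : Fin m → Fin n → R) (b : Fin m → L) : Prop :=
  ∃ x : Fin n → L, ∀ i, ∑ j, op (a i j) • x j = b i

variable {R} {a : Fin m → Fin n → R}

theorem HasSolution.map {L L' : Type*} [AddCommGroup L] [Module Rᵐᵒᵖ L] [AddCommGroup L']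
    [Module Rᵐᵒᵖ L'] {b : Fin m → L} (h : HasSolution R a b) (g : L →ₗ[Rᵐᵒᵖ] L') :
    HasSolution R a (g ∘ b) := by
  obtain ⟨x, hx⟩ := h
  exact ⟨g ∘ x, fun i => by simp [← hx i, map_sum]⟩

variable {ι : Type*} {M : ι → Type*} [∀ i, AddCommGroup (M i)] [∀ i, Module Rᵐᵒᵖ (M i)]

theorem HasSolution.pi {b : Fin m → ∀ i, M i} (h : ∀ i, HasSolution R a fun l => b l i) :
    HasSolution R a b := by
  choose x hx using h
  exact ⟨fun j i => x i j, fun l => funext fun i => by simpa [Finset.sum_apply] using hx i l⟩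

theorem HasSolution.dfinsupp {b : Fin m → Π₀ i, M i}
    (h : ∀ i, HasSolution R a fun l => b l i) : HasSolution R a b := by
  classical
  let s := Finset.univ.biUnion fun l => (b l).support
  have hb : DFinsupp.lmk (R := Rᵐᵒᵖ) s ∘ (fun l (i : s) => b l i) = b := by
    funext l
    ext i
    rw [comp_apply, DFinsupp.lmk_apply, DFinsupp.mk_apply]
    split_ifs with hi
    · rfl
    · by_contra hne
      exact hi <| Finset.mem_biUnion.2
        ⟨l, Finset.mem_univ l, DFinsupp.mem_support_iff.2 (Ne.symm hne)⟩
  rw [← hb]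
  exact (HasSolution.pi (M := fun i : s => M i) fun i => h i).map _

end Solvability

section Pushout

variable {S : Type*} [Ring S] {M P N : Type*} [AddCommGroup M] [Module S M] [AddCommGroup P]
  [Module S P] [AddCommGroup N] [Module S N] (f : M →ₗ[S] P) (g : M →ₗ[S] N)

abbrev Pushout : Type _ := (P × N) ⧸ range (f.prod (-g))

namespace Pushout

def inl : P →ₗ[S] Pushout f g := (range (f.prod (-g))).mkQ ∘ₗ LinearMap.inl S P N

def inr : N →ₗ[S] Pushout f g := (range (f.prod (-g))).mkQ ∘ₗ LinearMap.inr S P N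

theorem inl_comp : inl f g ∘ₗ f = inr f g ∘ₗ g := by
  ext u
  refine (Submodule.Quotient.eq _).mpr ⟨u, ?_⟩
  simp

theorem inr_injective (hf : Injective f) : Injective (inr f g) := by
  refine (injective_iff_map_eq_zero _).2 fun u hu => ?_
  obtain ⟨x, hx⟩ := (Submodule.Quotient.mk_eq_zero _).1 hu
  obtain ⟨hfx, hgx⟩ := Prod.ext_iff.1 hx
  have hx0 : x = 0 := hf (by simpa using hfx)
  simpa [hx0] using hgx.symm

end Pushout

end Pushout

section RelDivisible

variable (R : Type*) [Ring R] {M P N : Type*} [AddCommGroup M] [Module Rᵐᵒᵖ M] [AddCommGroup P]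
  [Module Rᵐᵒᵖ P] [AddCommGroup N] [Module Rᵐᵒᵖ N]

def IsRelDivisible (f : M →ₗ[Rᵐᵒᵖ] P) : Prop :=
  ∀ (r : R) (x : M) (y : P), f x = op r • y → ∃ x' : M, x = op r • x'

variable {R}

theorem Pushout.isRelDivisible_inr {f : M →ₗ[Rᵐᵒᵖ] P} (g : M →ₗ[Rᵐᵒᵖ] N)
    (hf : IsRelDivisible R f) : IsRelDivisible R (inr f g) := by
  intro r x y hxy
  obtain ⟨⟨p, v⟩, rfl⟩ := Submodule.mkQ_surjective _ y
  obtain ⟨w, hw⟩ := (Submodule.Quotient.eq _).1 hxy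
  obtain ⟨hfw, hgw⟩ := Prod.ext_iff.1 hw
  obtain ⟨w', rfl⟩ := hf r w (-p) (by simpa [smul_neg] using hfw)
  refine ⟨v - g w', ?_⟩
  replace hgw : -(op r • g w') = x - op r • v := by simpa using hgw
  rw [smul_sub, sub_eq_add_neg, hgw]
  abel

end RelDivisible

namespace RDCoflat

variable {R : Type u} [Ring R] {M P N : Type u} [AddCommGroup M] [Module Rᵐᵒᵖ M]
  [AddCommGroup P] [Module Rᵐᵒᵖ P] [AddCommGroup N] [Module Rᵐᵒᵖ N] {m n : ℕ}

theorem hasSolution_comp (hN : RDCoflat R N) (f : M →ₗ[Rᵐᵒᵖ] P) (hf : Injective f)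
    (hf_rd : IsRelDivisible R f) (g : M →ₗ[Rᵐᵒᵖ] N) {a : Fin m → Fin n → R} {k : Fin m → M}
    (h : HasSolution R a (f ∘ k)) : HasSolution R a (g ∘ k) := by
  refine hN _ (Pushout.inr f g) (Pushout.inr_injective f g hf)
    (Pushout.isRelDivisible_inr g hf_rd) m n a (g ∘ k) ?_
  have := h.map (Pushout.inl f g)
  rwa [← comp_assoc, ← coe_comp, Pushout.inl_comp] at this

theorem of_isPure (hP : RDCoflat R P) (f : M →ₗ[Rᵐᵒᵖ] P) (hf : IsPure R f) : RDCoflat R M :=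
  fun _ _ _ g hg hg_rd m n a k h => hf m n a k (hP.hasSolution_comp g hg hg_rd f h)

variable {ι : Type u} {M : ι → Type u} [∀ i, AddCommGroup (M i)] [∀ i, Module Rᵐᵒᵖ (M i)]

theorem pi (h : ∀ i, RDCoflat R (M i)) : RDCoflat R (∀ i, M i) :=
  fun _ _ _ f hf hf_rd _ _ _ _ hk =>
    HasSolution.pi fun i => (h i).hasSolution_comp f hf hf_rd (proj i) hk

theorem dfinsupp (h : ∀ i, RDCoflat R (M i)) : RDCoflat R (Π₀ i, M i) :=
  fun _ _ _ f hf hf_rd _ _ _ _ hk =>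
    HasSolution.dfinsupp fun i => (h i).hasSolution_comp f hf hf_rd (DFinsupp.lapply i) hk

end RDCoflat

/-- Pure submodules of RD-coflat right `R`-modules are RD-coflat, and direct products
and direct sums of RD-coflat right `R`-modules are RD-coflat. -/
theorem rdCoflat_pure_submodule_prod_dfinsupp (R : Type u) [Ring R] :
    (∀ (M P : Type u) [AddCommGroup M] [Module Rᵐᵒᵖ M] [AddCommGroup P]
      [Module Rᵐᵒᵖ P], ∀ f : M →ₗ[Rᵐᵒᵖ] P, RDCoflat R P → Function.Injective f →
        IsPure R f → RDCoflat R M) ∧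
    (∀ (ι : Type u) (M : ι → Type u) [∀ i, AddCommGroup (M i)]
      [∀ i, Module Rᵐᵒᵖ (M i)], (∀ i, RDCoflat R (M i)) → RDCoflat R (∀ i, M i)) ∧
    (∀ (ι : Type u) (M : ι → Type u) [∀ i, AddCommGroup (M i)]
      [∀ i, Module Rᵐᵒᵖ (M i)], (∀ i, RDCoflat R (M i)) → RDCoflat R (Π₀ i, M i)) :=
  ⟨fun _ _ _ _ _ _ f hP _ hf => hP.of_isPure f hf, fun _ _ _ _ => RDCoflat.pi,
    fun _ _ _ _ => RDCoflat.dfinsupp⟩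
end

section
/- If R is a finite ring, then every RD-coflat right R-module is RD-injective. -/
universe u

open MulOpposite

section Aux

variable (R : Type u) [Ring R]

def rowA (pI : R → Prop) (pJ : R × R → Prop) [DecidablePred pI] [DecidablePred pJ]
    [DecidableEq (R × R)] :
    (R ⊕ R × R) → Option (R × R) → R := fun i j =>
  Sum.elim
    (fun r => j.elim (if pI r then r else 0) (fun _ => 0))
    (fun rs => j.elim (if pJ rs then rs.2 else 0)
      (fun p => if pJ rs then (if p = rs then rs.1 else 0) else 0)) i

lemma rowA_sum_inl [Fintype R] (pI : R → Prop) (pJ : R × R → Prop)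
    [DecidablePred pI] [DecidablePred pJ] [DecidableEq (R × R)]
    {A : Type u} [AddCommGroup A] [Module Rᵐᵒᵖ A] (v : Option (R × R) → A) (r : R) :
    ∑ j, op (rowA R pI pJ (Sum.inl r) j) • v j
      = if pI r then op r • v none else 0 := by
  classical
  rw [Fintype.sum_option]
  simp only [rowA, Sum.elim_inl, Option.elim_none, Option.elim_some, op_zero, zero_smul,
    Finset.sum_const_zero, add_zero]
  split_ifs <;> simp

lemma rowA_sum_inr [Fintype R] (pI : R → Prop) (pJ : R × R → Prop)
    [DecidablePred pI] [DecidablePred pJ] [DecidableEq (R × R)]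
    {A : Type u} [AddCommGroup A] [Module Rᵐᵒᵖ A] (v : Option (R × R) → A) (rs : R × R) :
    ∑ j, op (rowA R pI pJ (Sum.inr rs) j) • v j
      = if pJ rs then op rs.2 • v none + op rs.1 • v (some rs) else 0 := by
  classical
  rw [Fintype.sum_option]
  simp only [rowA, Sum.elim_inr, Option.elim_none, Option.elim_some]
  by_cases h : pJ rs
  · simp only [h, if_true]
    congr 1
    have h1 : ∀ p : R × R, op (if p = rs then rs.1 else 0) • v (some p)
        = if p = rs then op rs.1 • v (some p) else 0 := by
      intro p; split_ifs <;> simp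
    rw [Finset.sum_congr rfl (fun p _ => h1 p), Finset.sum_ite_eq' Finset.univ rs]
    simp
  · simp [h]

lemma isPure_fintype {K L : Type u} [AddCommGroup K] [Module Rᵐᵒᵖ K] [AddCommGroup L]
    [Module Rᵐᵒᵖ L] {f : K →ₗ[Rᵐᵒᵖ] L} (hp : IsPure R f)
    (ι₁ ι₂ : Type u) [Fintype ι₁] [Fintype ι₂] (a : ι₁ → ι₂ → R) (k : ι₁ → K)
    (hx : ∃ x : ι₂ → L, ∀ i, (∑ j, op (a i j) • x j) = f (k i)) :
    ∃ y : ι₂ → K, ∀ i, (∑ j, op (a i j) • y j) = k i := by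
  obtain ⟨x, hx⟩ := hx
  set e₁ := Fintype.equivFin ι₁
  set e₂ := Fintype.equivFin ι₂
  obtain ⟨y, hy⟩ := hp _ _ (fun i j => a (e₁.symm i) (e₂.symm j)) (fun i => k (e₁.symm i))
    ⟨fun j => x (e₂.symm j), fun i => by
      rw [← hx (e₁.symm i)]
      exact Fintype.sum_equiv e₂.symm
        (fun j => op (a (e₁.symm i) (e₂.symm j)) • x (e₂.symm j))
        (fun j => op (a (e₁.symm i) j) • x j) (fun j => rfl)⟩
  refine ⟨fun j => y (e₂ j), fun i => ?_⟩
  have := hy (e₁ i)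
  simp only [Equiv.symm_apply_apply] at this
  rw [← this]
  exact Fintype.sum_equiv e₂ _ _ (fun j => by rw [Equiv.symm_apply_apply])

lemma exists_retraction [Finite R] (M : Type u) [AddCommGroup M] [Module Rᵐᵒᵖ M]
    (hM : RDCoflat R M) (P : Type u) [AddCommGroup P] [Module Rᵐᵒᵖ P]
    (ι : M →ₗ[Rᵐᵒᵖ] P) (hinj : Function.Injective ι)
    (hrd : ∀ (r : R) (m : M) (p : P), ι m = op r • p → ∃ m', m = op r • m') :
    ∃ ρ : P →ₗ[Rᵐᵒᵖ] M, ∀ m, ρ (ι m) = m := by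
  classical
  letI : Fintype R := Fintype.ofFinite R
  set S : Set (Submodule Rᵐᵒᵖ P) :=
    {N | (∀ m : M, ι m ∈ N → m = 0) ∧
      ∀ (r : R) (m : M) (p : P), ι m - op r • p ∈ N → ∃ m', m = op r • m'} with hS
  have hbot : (⊥ : Submodule Rᵐᵒᵖ P) ∈ S := by
    constructor
    · intro m hm
      rw [Submodule.mem_bot] at hm
      exact hinj (by simpa using hm)
    · intro r m p hm
      rw [Submodule.mem_bot, sub_eq_zero] at hm
      exact hrd r m p hm
  have hchain : ∀ c ⊆ S, IsChain (· ≤ ·) c → ∀ y ∈ c, ∃ ub ∈ S, ∀ z ∈ c, z ≤ ub := by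
    intro c hcS hc y hy
    refine ⟨sSup c, ?_, fun z hz => le_sSup hz⟩
    have hmem : ∀ w : P, w ∈ sSup c → ∃ N ∈ c, w ∈ N := by
      intro w hw
      rwa [Submodule.mem_sSup_of_directed ⟨y, hy⟩ hc.directedOn] at hw
    constructor
    · intro m hm
      obtain ⟨N, hN, hmN⟩ := hmem _ hm
      exact (hcS hN).1 m hmN
    · intro r m p hm
      obtain ⟨N, hN, hmN⟩ := hmem _ hm
      exact (hcS hN).2 r m p hmN
  obtain ⟨N, -, hNmax⟩ := zorn_le_nonempty₀ S hchain ⊥ hbot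
  have hNS : N ∈ S := hNmax.1
  -- key claim: M + N = P
  have hcompl : ∀ x : P, ∃ m : M, x - ι m ∈ N := by
    intro x
    by_contra hcon
    push_neg at hcon
    set Pb := P ⧸ N with hPb
    set pi := N.mkQ with hpi
    set ib : M →ₗ[Rᵐᵒᵖ] Pb := pi.comp ι with hib
    have hmem0 : ∀ w : P, pi w = 0 ↔ w ∈ N := by
      intro w
      rw [hpi, Submodule.mkQ_apply, Submodule.Quotient.mk_eq_zero]
    have hinj0 : ∀ m : M, ib m = 0 → m = 0 := by
      intro m h
      exact hNS.1 m ((hmem0 (ι m)).1 h)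
    have hinj' : Function.Injective ib := by
      intro m₁ m₂ h
      have h0 : m₁ - m₂ = 0 := hinj0 _ (by rw [map_sub, h, sub_self])
      exact sub_eq_zero.mp h0
    have hrd' : ∀ (r : R) (m : M) (yb : Pb), ib m = op r • yb → ∃ m', m = op r • m' := by
      intro r m yb h
      obtain ⟨p, rfl⟩ := N.mkQ_surjective yb
      refine hNS.2 r m p ((hmem0 _).1 ?_)
      rw [map_sub, map_smul]
      show ib m - op r • N.mkQ p = 0
      rw [h, sub_self]
    have hpure := hM Pb ib hinj' hrd'
    set xb := pi x with hxb
    set pI : R → Prop := fun r => ∃ c : M, ib c = op r • xb with hpIdef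
    set pJ : R × R → Prop :=
      fun rs => ∃ (c : M) (q : Pb), op rs.2 • xb = ib c + op rs.1 • q with hpJdef
    set kv : (R ⊕ R × R) → M := fun i =>
      Sum.elim (fun r => if h : pI r then h.choose else 0)
        (fun rs => if h : pJ rs then h.choose else 0) i with hkv
    have hxv : ∃ xv : Option (R × R) → Pb,
        ∀ i, (∑ j, op (rowA R pI pJ i j) • xv j) = ib (kv i) := by
      refine ⟨fun j => j.elim xb
        (fun rs => if h : pJ rs then - h.choose_spec.choose else 0), fun i => ?_⟩
      rcases i with r | rs
      · rw [rowA_sum_inl]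
        simp only [hkv, Sum.elim_inl]
        by_cases h : pI r
        · simp only [Option.elim_none, if_pos h, dif_pos h]
          exact h.choose_spec.symm
        · simp only [if_neg h, dif_neg h, map_zero]
      · rw [rowA_sum_inr]
        simp only [hkv, Sum.elim_inr]
        by_cases h : pJ rs
        · simp only [Option.elim_none, Option.elim_some, if_pos h, dif_pos h]
          have hq := h.choose_spec.choose_spec
          rw [smul_neg, ← sub_eq_add_neg, sub_eq_iff_eq_add]
          exact hq
        · simp only [if_neg h, dif_neg h, map_zero]
    obtain ⟨y, hy⟩ := isPure_fintype R hpure _ _ (rowA R pI pJ) kv hxv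
    set m₀ := y none with hm₀
    set z := xb - ib m₀ with hzdef
    have fact1 : ∀ r : R, pI r → op r • z = 0 := by
      intro r h
      have := hy (Sum.inl r)
      rw [rowA_sum_inl, if_pos h] at this
      simp only [hkv, Sum.elim_inl, dif_pos h] at this
      rw [hzdef, smul_sub, hm₀, ← map_smul ib (op r) (y none), this, h.choose_spec, sub_self]
    have fact2 : ∀ rs : R × R, pJ rs → ∃ w : Pb, op rs.2 • z = op rs.1 • w := by
      intro rs h
      have heq := hy (Sum.inr rs)
      rw [rowA_sum_inr, if_pos h] at heq
      simp only [hkv, Sum.elim_inr, dif_pos h] at heq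
      obtain ⟨q, hq⟩ := h.choose_spec
      refine ⟨ib (y (some rs)) + q, ?_⟩
      have e3 : ib (op rs.2 • y none + op rs.1 • y (some rs)) = op rs.2 • xb - op rs.1 • q := by
        rw [heq]
        exact eq_sub_of_add_eq hq.symm
      rw [map_add, map_smul, map_smul] at e3
      have e5 : op rs.2 • ib (y none) + op rs.1 • ib (y (some rs)) + op rs.1 • q
          = op rs.2 • xb := by rw [e3]; abel
      rw [hzdef, smul_sub, hm₀, smul_add, ← e5]
      abel
    set N' : Submodule Rᵐᵒᵖ P := Submodule.comap pi (Submodule.span Rᵐᵒᵖ {z}) with hN'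
    have hmemN' : ∀ w : P, w ∈ N' ↔ ∃ s : R, op s • z = pi w := by
      intro w
      rw [hN', Submodule.mem_comap, Submodule.mem_span_singleton]
      constructor
      · rintro ⟨aa, ha⟩; exact ⟨aa.unop, by rwa [op_unop]⟩
      · rintro ⟨s, hs⟩; exact ⟨op s, hs⟩
    have hNleN' : N ≤ N' := by
      intro n hn
      rw [hmemN']
      exact ⟨0, by rw [(hmem0 n).2 hn, op_zero, zero_smul]⟩
    have hN'S : N' ∈ S := by
      constructor
      · intro m hm
        obtain ⟨s, hs⟩ := (hmemN' (ι m)).1 hm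
        have hs' : op s • z = ib m := hs
        have hpI : pI s := by
          refine ⟨m + op s • m₀, ?_⟩
          rw [map_add, map_smul, ← hs', hzdef, smul_sub]
          abel
        have h0 : op s • z = 0 := fact1 s hpI
        exact hinj0 m (by rw [← hs', h0])
      · intro r m p hm
        obtain ⟨s, hs⟩ := (hmemN' _).1 hm
        rw [map_sub, map_smul] at hs
        have hs' : op s • z = ib m - op r • pi p := hs
        have hpJ : pJ (r, s) := by
          refine ⟨op s • m₀ + m, -(pi p), ?_⟩
          show op s • xb = ib (op s • m₀ + m) + op r • (-(pi p))
          have hxbz : op s • xb = op s • z + op s • ib m₀ := by rw [hzdef, smul_sub]; abel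
          rw [map_add, map_smul, smul_neg, hxbz, hs']
          abel
        obtain ⟨w, hw⟩ := fact2 (r, s) hpJ
        have hw' : op s • z = op r • w := hw
        have hibm : ib m = op r • (w + pi p) := by
          have h2 : ib m = op s • z + op r • pi p := by rw [hs']; abel
          rw [h2, hw', smul_add]
        obtain ⟨v, hv⟩ := N.mkQ_surjective (w + pi p)
        refine hNS.2 r m v ((hmem0 _).1 ?_)
        rw [map_sub, map_smul]
        show ib m - op r • N.mkQ v = 0
        rw [hv, hibm, sub_self]
    have hN'leN : N' ≤ N := hNmax.2 hN'S hNleN'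
    have hxmem : x - ι m₀ ∈ N' := by
      rw [hmemN']
      refine ⟨1, ?_⟩
      rw [op_one, one_smul, hzdef, map_sub]
      rfl
    exact hcon m₀ (hN'leN hxmem)
  -- build the retraction
  have hdisj : Disjoint (LinearMap.range ι) N := by
    rw [Submodule.disjoint_def]
    rintro w ⟨m, rfl⟩ hwN
    rw [hNS.1 m hwN]; simp
  have hcodisj : Codisjoint (LinearMap.range ι) N := by
    rw [codisjoint_iff, eq_top_iff]
    intro x _
    obtain ⟨m, hm⟩ := hcompl x
    have : x = ι m + (x - ι m) := by abel
    rw [this]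
    exact Submodule.add_mem_sup (LinearMap.mem_range_self ι m) hm
  have hco : IsCompl (LinearMap.range ι) N := ⟨hdisj, hcodisj⟩
  set e := LinearEquiv.ofInjective ι hinj
  refine ⟨(e.symm : LinearMap.range ι →ₗ[Rᵐᵒᵖ] M).comp
    (Submodule.linearProjOfIsCompl _ _ hco), fun m => ?_⟩
  have h1 : Submodule.linearProjOfIsCompl _ _ hco (ι m) = e m := by
    have : (e m : P) = ι m := rfl
    rw [← this]
    exact Submodule.linearProjOfIsCompl_apply_left hco (e m)
  simp [LinearMap.comp_apply, h1]

end Aux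

/-- If `R` is a finite ring, then every RD-coflat right `R`-module is RD-injective. -/
theorem rdCoflat_rdInjective_of_finite (R : Type u) [Ring R] [Finite R]
    (M : Type u) [AddCommGroup M] [Module Rᵐᵒᵖ M] (hM : RDCoflat R M) :
    RDInjective R M := by
  intro K L _ _ _ _ f hf hrdf g
  set W : Submodule Rᵐᵒᵖ (M × L) := LinearMap.range (LinearMap.prod g (-f)) with hW
  set P := (M × L) ⧸ W with hP
  set π := W.mkQ with hπ
  set ι : M →ₗ[Rᵐᵒᵖ] P := π.comp (LinearMap.inl Rᵐᵒᵖ M L) with hι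
  set ιL : L →ₗ[Rᵐᵒᵖ] P := π.comp (LinearMap.inr Rᵐᵒᵖ M L) with hιL
  have hmemW : ∀ w : M × L, w ∈ W ↔ ∃ k : K, g k = w.1 ∧ -(f k) = w.2 := by
    intro w
    rw [hW, LinearMap.mem_range]
    constructor
    · rintro ⟨k, hk⟩
      exact ⟨k, by rw [← hk]; rfl, by rw [← hk]; rfl⟩
    · rintro ⟨k, h1, h2⟩
      exact ⟨k, Prod.ext h1 h2⟩
  have hπ0 : ∀ w : M × L, π w = 0 ↔ w ∈ W := by
    intro w
    rw [hπ, Submodule.mkQ_apply, Submodule.Quotient.mk_eq_zero]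
  have hιinj : Function.Injective ι := by
    intro m₁ m₂ h
    have h2 : ι (m₁ - m₂) = 0 := by rw [map_sub, h, sub_self]
    have h3 : ((m₁ - m₂, 0) : M × L) ∈ W := (hπ0 _).1 h2
    obtain ⟨k, hk1, hk2⟩ := (hmemW _).1 h3
    have hk0 : k = 0 := by
      apply hf
      rw [map_zero]
      have h4 : -(f k) = (0 : L) := hk2
      rw [neg_eq_zero] at h4
      exact h4
    have h5 : g k = m₁ - m₂ := hk1
    rw [hk0, map_zero] at h5
    exact sub_eq_zero.mp h5.symm
  have hιrd : ∀ (r : R) (m : M) (p : P), ι m = op r • p → ∃ m', m = op r • m' := by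
    intro r m p hp
    obtain ⟨⟨u, v⟩, rfl⟩ := W.mkQ_surjective p
    have h2 : π ((m, 0) - op r • (u, v)) = 0 := by
      rw [map_sub, map_smul]
      show ι m - op r • π (u, v) = 0
      rw [hp, sub_self]
    obtain ⟨k, hk1, hk2⟩ := (hmemW _).1 ((hπ0 _).1 h2)
    have hfk : f k = op r • v := by
      have h3 : -(f k) = 0 - op r • v := hk2
      rw [zero_sub] at h3
      exact neg_inj.mp h3
    obtain ⟨k', hk'⟩ := hrdf r k v hfk
    refine ⟨u + g k', ?_⟩
    have : g k = m - op r • u := hk1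
    have h4 : m = op r • u + g k := by rw [this]; abel
    rw [h4, hk', map_smul, smul_add]
  obtain ⟨ρ, hρ⟩ := exists_retraction R M hM P ι hιinj hιrd
  refine ⟨ρ.comp ιL, ?_⟩
  ext k
  show ρ (ιL (f k)) = g k
  have hkey : ιL (f k) = ι (g k) := by
    have hmem : ((0, f k) - (g k, 0) : M × L) ∈ W := by
      refine (hmemW _).2 ⟨-k, ?_, ?_⟩
      · show g (-k) = 0 - g k
        rw [map_neg, zero_sub]
      · show -(f (-k)) = f k - 0
        rw [map_neg, neg_neg, sub_zero]
    have h6 : π (0, f k) = π (g k, 0) := by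
      rw [← sub_eq_zero, ← map_sub]
      exact (hπ0 _).2 hmem
    exact h6
  rw [hkey, hρ]
end

section
/- Let R be a ring. Every direct sum of RD-injective right R-modules is RD-injective if and only if every RD-injective right R-module is Σ-pure-injective. -/
universe u

open MulOpposite

section Aux

variable {R : Type u} [Ring R]

/-- A pure embedding satisfies the relative-divisibility condition. -/
lemma isPure_rd {K L : Type u} [AddCommGroup K] [Module Rᵐᵒᵖ K]
    [AddCommGroup L] [Module Rᵐᵒᵖ L] {f : K →ₗ[Rᵐᵒᵖ] L} (hp : IsPure R f) :
    ∀ (r : R) (k : K) (y : L), f k = op r • y → ∃ k' : K, k = op r • k' := by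
  intro r k y hy
  obtain ⟨z, hz⟩ := hp 1 1 (fun _ _ => r) (fun _ => k)
    ⟨fun _ => y, fun i => by simp [Fin.sum_univ_one, hy]⟩
  exact ⟨z 0, by simpa [Fin.sum_univ_one] using (hz 0).symm⟩

/-- An RD-injective module is pure-injective. -/
lemma RDInjective.pureInjective {N : Type u} [AddCommGroup N] [Module Rᵐᵒᵖ N]
    (hN : RDInjective R N) : PureInjective R N := by
  intro K L _ _ _ _ f hf hp g
  exact hN K L f hf (isPure_rd hp) g

/-- Products of RD-injective modules are RD-injective. -/
lemma pi_rdInjective {ι : Type u} {M : ι → Type u} [∀ i, AddCommGroup (M i)]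
    [∀ i, Module Rᵐᵒᵖ (M i)] (hM : ∀ i, RDInjective R (M i)) :
    RDInjective R (∀ i, M i) := by
  intro K L _ _ _ _ f hf hrd g
  choose h hh using fun i => hM i K L f hf hrd ((LinearMap.proj i).comp g)
  refine ⟨LinearMap.pi h, ?_⟩
  ext k i
  exact congrArg (fun φ => φ k) (hh i)

/-- The coercion of the direct sum into the product, as a linear map. -/
def dfinsuppIncl (R : Type u) [Ring R] {ι : Type u} (M : ι → Type u)
    [∀ i, AddCommGroup (M i)] [∀ i, Module Rᵐᵒᵖ (M i)] :
    (Π₀ i, M i) →ₗ[Rᵐᵒᵖ] (∀ i, M i) where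
  toFun x i := x i
  map_add' x y := by funext i; simp
  map_smul' r x := by funext i; simp

lemma dfinsuppIncl_injective {ι : Type u} (M : ι → Type u)
    [∀ i, AddCommGroup (M i)] [∀ i, Module Rᵐᵒᵖ (M i)] :
    Function.Injective (dfinsuppIncl R M) := by
  intro x y hxy
  ext i
  exact congrFun hxy i

/-- The direct sum is a pure submodule of the product. -/
lemma dfinsuppIncl_isPure {ι : Type u} (M : ι → Type u)
    [∀ i, AddCommGroup (M i)] [∀ i, Module Rᵐᵒᵖ (M i)] :
    IsPure R (dfinsuppIncl R M) := by
  classical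
  rintro m n a k ⟨x, hx⟩
  let S : Finset ι := Finset.univ.biUnion fun i : Fin m => (k i).support
  refine ⟨fun j => DFinsupp.mk S (fun c => x j c.1), fun i => ?_⟩
  ext c
  rw [DFinsupp.finset_sum_apply]
  by_cases hc : c ∈ S
  · have h1 : ∀ j, (op (a i j) • DFinsupp.mk S (fun c => x j c.1)) c
        = op (a i j) • x j c := by
      intro j
      rw [DFinsupp.smul_apply, DFinsupp.mk_apply, dif_pos hc]
    rw [Finset.sum_congr rfl fun j _ => h1 j]
    have := congrFun (hx i) c
    simpa [Finset.sum_apply, dfinsuppIncl] using this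
  · have h1 : ∀ j, (op (a i j) • DFinsupp.mk S (fun c => x j c.1)) c = 0 := by
      intro j
      rw [DFinsupp.smul_apply, DFinsupp.mk_apply, dif_neg hc, smul_zero]
    rw [Finset.sum_congr rfl fun j _ => h1 j, Finset.sum_const_zero]
    by_contra hne
    exact hc (Finset.mem_biUnion.2 ⟨i, Finset.mem_univ i,
      DFinsupp.mem_support_iff.2 fun h0 => hne h0.symm⟩)

end Aux

/-- Every direct sum of RD-injective right `R`-modules is RD-injective if and only if
every RD-injective right `R`-module is `Σ`-pure-injective (all its direct sum powers
are pure-injective). -/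
theorem directSum_rdInjective_iff_sigma_pureInjective (R : Type u) [Ring R] :
    (∀ (ι : Type u) (M : ι → Type u) [∀ i, AddCommGroup (M i)]
      [∀ i, Module Rᵐᵒᵖ (M i)],
      (∀ i, RDInjective R (M i)) → RDInjective R (Π₀ i, M i)) ↔
    (∀ (M : Type u) [AddCommGroup M] [Module Rᵐᵒᵖ M],
      RDInjective R M → ∀ ι : Type u, PureInjective R (ι →₀ M)) := by
  constructor
  · -- direct sums RD-injective → Σ-pure-injective
    intro H M _ _ hM ι
    classical
    have hds : RDInjective R (Π₀ _ : ι, M) := H ι (fun _ => M) (fun _ => hM)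
    intro K L _ _ _ _ f hf hp g
    let e : (ι →₀ M) ≃ₗ[Rᵐᵒᵖ] (Π₀ _ : ι, M) := finsuppLequivDFinsupp Rᵐᵒᵖ
    obtain ⟨h, hh⟩ := hds K L f hf (isPure_rd hp) (e.toLinearMap.comp g)
    refine ⟨e.symm.toLinearMap.comp h, ?_⟩
    ext k
    have : h (f k) = e (g k) := congrArg (fun φ => φ k) hh
    simp [this]
  · -- Σ-pure-injective → direct sums RD-injective
    intro H ι M _ _ hM
    classical
    have hP : RDInjective R (∀ j, M j) := pi_rdInjective hM
    have hPI : PureInjective R (ι →₀ (∀ j, M j)) := H _ hP ι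
    -- `Π₀ i, M i` is a retract of `ι →₀ (∀ j, M j)`, hence pure-injective
    let eq1 : (ι →₀ (∀ j, M j)) ≃ₗ[Rᵐᵒᵖ] (Π₀ _ : ι, ∀ j, M j) :=
      finsuppLequivDFinsupp Rᵐᵒᵖ
    let ψ : (Π₀ i, M i) →ₗ[Rᵐᵒᵖ] (ι →₀ (∀ j, M j)) :=
      eq1.symm.toLinearMap.comp
        (DFinsupp.mapRange.linearMap fun i => LinearMap.single Rᵐᵒᵖ M i)
    let π : (ι →₀ (∀ j, M j)) →ₗ[Rᵐᵒᵖ] (Π₀ i, M i) :=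
      (DFinsupp.mapRange.linearMap fun i => LinearMap.proj (R := Rᵐᵒᵖ) i).comp
        eq1.toLinearMap
    have hπψ : ∀ x : Π₀ i, M i, π (ψ x) = x := by
      intro x
      ext i
      simp [π, ψ, DFinsupp.mapRange_apply]
    have hDPI : PureInjective R (Π₀ i, M i) := by
      intro K L _ _ _ _ f hf hp g
      obtain ⟨h, hh⟩ := hPI K L f hf hp (ψ.comp g)
      refine ⟨π.comp h, ?_⟩
      ext k
      have : h (f k) = ψ (g k) := congrArg (fun φ => φ k) hh
      simp [this, hπψ]
    -- `Π₀ i, M i` is pure in the product, hence a direct summand of it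
    obtain ⟨ρ, hρ⟩ := hDPI (Π₀ i, M i) (∀ j, M j) (dfinsuppIncl R M)
      (dfinsuppIncl_injective M) (dfinsuppIncl_isPure M) LinearMap.id
    -- conclude RD-injectivity
    intro K L _ _ _ _ f hf hrd g
    obtain ⟨h, hh⟩ := hP K L f hf hrd ((dfinsuppIncl R M).comp g)
    refine ⟨ρ.comp h, ?_⟩
    ext k
    have h1 : h (f k) = dfinsuppIncl R M (g k) := congrArg (fun φ => φ k) hh
    have h2 : ρ (dfinsuppIncl R M (g k)) = g k :=
      congrArg (fun φ => φ (g k)) hρ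
    simp [h1, h2]
end

section
/- Let R be a commutative local perfect ring, P its maximal ideal, E the injective hull of R/P, A a proper ideal of R, and 𝒜* the set of maximal elements among principal ideals contained in A. Then the RD-injective hull of E[A] = {e ∈ E | Ae = 0} is isomorphic to the product ∏_{r* ∈ 𝒜*} E[r*]. -/
universe u

open MulOpposite

open Submodule IsLocalRing

/-!
Bass's argument makes the maximal ideal `P` T-nilpotent: given `c₀, c₁, … ∈ P`, the direct limit
of `R →c₀ R →c₁ R → ⋯` is flat, hence projective; all its linear forms take values in `P` and
every finite subset lies in a cyclic submodule, and a projective module with these two properties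
is zero, so `c₀ ⋯ cₙ = 0` for some `n`. T-nilpotency yields nonzero socle elements in nonzero
modules and the ascending chain condition on principal ideals, so every principal ideal inside
`A` lies in a member of `𝒜*`.

The hull is the diagonal map `ψ : E[A] → ∏ E[r*]`. Since `E` is injective, `x ∈ E` is divisible
by `r` inside `E[B]` as soon as `(B : r) x = 0`. This gives relative divisibility of `ψ`, and it
shows that a socle element of `E` is divisible by `r₀` in `E[r*]` for every `r* ≠ r₀*` in `𝒜*`,
by maximality of `r₀*`. So if `w ≠ 0` is a socle element of a submodule `N` with
`N ∩ im ψ = 0` and `w(r₀*) ≠ 0`, then `ψ(w(r₀*)) ≡ w ≡ 0` modulo `r₀ ∏ E[r*] + N`, and the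
relative divisibility of `(im ψ + N)/N` puts `w(r₀*)` into `r₀ E[A] = 0`. Finally each `E[r]` is
RD-injective, hence so is the product.
-/

def Ideal.IsTNilpotent {R : Type*} [CommRing R] (I : Ideal R) : Prop :=
  ∀ c : ℕ → R, (∀ i, c i ∈ I) → ∃ n, ∏ i ∈ Finset.range n, c i = 0

namespace Ideal.IsTNilpotent

variable {R : Type u} [CommRing R] {I : Ideal R}

theorem exists_smul_ne_zero_forall_smul_eq_zero (hI : I.IsTNilpotent) {M : Type*}
    [AddCommGroup M] [Module R M] {x : M} (hx : x ≠ 0) :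
    ∃ t : R, t • x ≠ 0 ∧ ∀ q ∈ I, q • t • x = 0 := by
  by_contra! h
  choose! q hqI hq using h
  let t : ℕ → R := fun n ↦ Nat.rec 1 (fun _ s ↦ q s * s) n
  have ht : ∀ n, t n • x ≠ 0 ∧ t n = ∏ i ∈ Finset.range n, q (t i) := by
    intro n
    induction n with
    | zero => simpa [t] using hx
    | succ n ih =>
      refine ⟨by simpa only [t, mul_smul] using hq _ ih.1, ?_⟩
      rw [Finset.prod_range_succ, ← ih.2, mul_comm]
  obtain ⟨n, hn⟩ := hI (fun i ↦ q (t i)) fun i ↦ hqI _ (ht i).1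
  exact (ht n).1 (by rw [(ht n).2, hn, zero_smul])

theorem eq_zero_of_eq_mul_succ (hI : I.IsTNilpotent) {b c : ℕ → R} (hc : ∀ n, c n ∈ I)
    (hb : ∀ n, b n = c n * b (n + 1)) (n : ℕ) : b n = 0 := by
  have htel : ∀ m, b n = (∏ i ∈ Finset.range m, c (n + i)) * b (n + m) := by
    intro m
    induction m with
    | zero => simp
    | succ m ih => rw [ih, hb (n + m), Finset.prod_range_succ, mul_assoc, ← add_assoc]
  obtain ⟨m, hm⟩ := hI (fun i ↦ c (n + i)) fun i ↦ hc _
  rw [htel m, hm, zero_mul]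

end Ideal.IsTNilpotent

section Bass

variable {R : Type u} [CommRing R]

section DirectLimitSelf

variable {ι : Type*} [Preorder ι] [DecidableEq ι] [IsDirectedOrder ι] [Nonempty ι]
  (f : ∀ i j : ι, i ≤ j → R →ₗ[R] R)

open Module.DirectLimit in
theorem Module.DirectLimit.exists_forall_mem_span_of_one
    (s : Finset (Module.DirectLimit (fun _ : ι ↦ R) f)) :
    ∃ n, ∀ y ∈ s, y ∈ R ∙ of R ι (fun _ ↦ R) f n 1 := by
  choose i v hv using fun y : Module.DirectLimit (fun _ : ι ↦ R) f ↦ exists_of y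
  obtain ⟨n, hn⟩ := (s.image i).exists_le
  refine ⟨n, fun y hy ↦ mem_span_singleton.mpr
    ⟨f (i y) n (hn _ (s.mem_image_of_mem i hy)) (v y), ?_⟩⟩
  rw [← map_smul, smul_eq_mul, mul_one, of_f, hv]

variable [DirectedSystem (fun _ : ι ↦ R) (f · · ·)]

theorem Module.Flat.directLimit_self : Module.Flat R (Module.DirectLimit (fun _ : ι ↦ R) f) := by
  classical
  refine Module.Flat.of_forall_isTrivialRelation fun {l g x} hsum ↦ ?_
  obtain ⟨n, hn⟩ := Module.DirectLimit.exists_forall_mem_span_of_one f (Finset.univ.image x)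
  choose a ha using fun i ↦ mem_span_singleton.mp (hn (x i) (Finset.mem_image_of_mem x
    (Finset.mem_univ i)))
  have : Module.DirectLimit.of R ι _ f n (∑ i, g i * a i) = 0 := by
    simp only [← ha, smul_smul, ← Finset.sum_smul] at hsum
    rw [← hsum, ← map_smul, smul_eq_mul, mul_one]
  obtain ⟨m, hnm, hm⟩ := Module.DirectLimit.of.zero_exact this
  refine ⟨1, fun i _ ↦ a i * f n m hnm 1, fun _ ↦ Module.DirectLimit.of R ι _ f m 1,
    fun i ↦ ?_, fun _ ↦ ?_⟩
  · dsimp only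
    rw [Finset.univ_unique, Finset.sum_singleton, ← ha, mul_smul,
      ← map_smul (Module.DirectLimit.of R ι _ f m), smul_eq_mul, mul_one, Module.DirectLimit.of_f]
  · rw [← mul_one (∑ i, g i * a i), ← smul_eq_mul, map_smul, smul_eq_mul, Finset.sum_mul] at hm
    simpa only [mul_assoc] using hm

end DirectLimitSelf

theorem Module.Projective.eq_zero_of_locallyCyclic {P : Type*} [AddCommGroup P] [Module R P]
    [Module.Projective R P] (hdual : ∀ (φ : P →ₗ[R] R) (y : P), φ y ∈ Ideal.jacobson ⊥)
    (hcyc : ∀ s : Finset P, ∃ z, ∀ y ∈ s, y ∈ R ∙ z) (x : P) : x = 0 := by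
  classical
  obtain ⟨s, hs⟩ := Module.projective_def'.mp ‹Module.Projective R P›
  obtain ⟨z, hz⟩ := hcyc (insert x (s x).support)
  obtain ⟨b, rfl⟩ := mem_span_singleton.mp (hz x (Finset.mem_insert_self _ _))
  choose! u hu using fun y (hy : y ∈ (s (b • z)).support) ↦
    mem_span_singleton.mp (hz y (Finset.mem_insert_of_mem hy))
  set a := ∑ y ∈ (s (b • z)).support, s z y * u y
  have ha : a ∈ Ideal.jacobson ⊥ :=
    Ideal.sum_mem _ fun y _ ↦ Ideal.mul_mem_right _ _ (hdual (Finsupp.lapply y ∘ₗ s) z)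
  have hfix : b • z = a • b • z := by
    conv_lhs => rw [← LinearMap.id_apply (R := R) (b • z), ← hs]
    rw [LinearMap.comp_apply, Finsupp.linearCombination_apply, Finsupp.sum, Finset.sum_smul]
    refine Finset.sum_congr rfl fun y hy ↦ ?_
    calc s (b • z) y • id y = (b * s z y) • u y • z := by
          rw [map_smul, Finsupp.smul_apply, smul_eq_mul, hu y hy, id]
      _ = (s z y * u y) • b • z := by rw [smul_smul, smul_smul]; ring_nf
  have hunit : IsUnit (1 - a) := by
    simpa [sub_eq_add_neg, add_comm] using Ideal.mem_jacobson_bot.mp ha (-1)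
  rw [← hunit.smul_eq_zero, sub_smul, one_smul, ← hfix, sub_self]

def bassTransition (c : ℕ → R) (i j : ℕ) (_ : i ≤ j) : R →ₗ[R] R :=
  LinearMap.lsmul R R (∏ t ∈ Finset.Ico i j, c t)

instance (c : ℕ → R) : DirectedSystem (fun _ : ℕ ↦ R) (bassTransition c · · ·) where
  map_self i x := by simp [bassTransition]
  map_map k j i hij hjk x := by
    simp only [bassTransition, LinearMap.lsmul_apply, smul_eq_mul]
    rw [← mul_assoc, mul_comm (∏ t ∈ Finset.Ico j k, c t), Finset.prod_Ico_consecutive _ hij hjk]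

theorem isTNilpotent_jacobson_of_flat_projective
    (hperf : ∀ (M : Type u) [AddCommGroup M] [Module R M],
      Module.Flat R M → Module.Projective R M) :
    (Ideal.jacobson (⊥ : Ideal R)).IsTNilpotent := by
  intro c hc
  let F := Module.DirectLimit (fun _ : ℕ ↦ R) (bassTransition c)
  let x : ℕ → F := fun i ↦ Module.DirectLimit.of R ℕ _ (bassTransition c) i 1
  have hx : ∀ i, x i = c i • x (i + 1) := fun i ↦ by
    dsimp only [x]
    rw [← map_smul, smul_eq_mul, mul_one, ← Module.DirectLimit.of_f (hij := i.le_succ)]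
    simp [bassTransition]
  have hdual : ∀ (φ : F →ₗ[R] R) (y : F), φ y ∈ Ideal.jacobson ⊥ := by
    intro φ y
    obtain ⟨i, v, rfl⟩ := Module.DirectLimit.exists_of y
    have : Module.DirectLimit.of R ℕ _ (bassTransition c) i v = (v * c i) • x (i + 1) := by
      rw [mul_smul, ← hx, ← map_smul, smul_eq_mul, mul_one]
    rw [this, map_smul, smul_eq_mul]
    exact Ideal.mul_mem_right _ _ (Ideal.mul_mem_left _ _ (hc i))
  have := hperf F (Module.Flat.directLimit_self _)
  obtain ⟨n, _, hn⟩ := Module.DirectLimit.of.zero_exact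
    (Module.Projective.eq_zero_of_locallyCyclic hdual
      (fun s ↦ (Module.DirectLimit.exists_forall_mem_span_of_one _ s).imp' _ fun _ ↦ id) (x 0))
  refine ⟨n, ?_⟩
  rw [Finset.range_eq_Ico]
  simpa only [bassTransition, LinearMap.lsmul_apply, smul_eq_mul, mul_one] using hn

end Bass

section RDInjective

variable {R : Type u} [CommRing R]

theorem RDInjectiveC.pi {ι : Type u} {N : ι → Type u} [∀ i, AddCommGroup (N i)]
    [∀ i, Module R (N i)] (hN : ∀ i, RDInjectiveC R (N i)) : RDInjectiveC R (∀ i, N i) := by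
  intro K L _ _ _ _ f hf hrd g
  choose h hh using fun i ↦ hN i K L f hf hrd (LinearMap.proj i ∘ₗ g)
  exact ⟨LinearMap.pi h, LinearMap.ext fun k ↦ funext fun i ↦ LinearMap.congr_fun (hh i) k⟩

variable {E : Type u} [AddCommGroup E] [Module R E]

theorem exists_mem_torsionBySet_smul_eq (hE : Module.Injective R E) (B : Ideal R) {r : R} {x : E}
    (hx : ∀ t, t * r ∈ B → t • x = 0) : ∃ e ∈ torsionBySet R E B, r • e = x := by
  let C : Ideal R := Submodule.comap (LinearMap.mulRight R r) B
  have hq : Function.Injective (C.mapQ B (LinearMap.mulRight R r) le_rfl) := by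
    rw [← LinearMap.ker_eq_bot, ker_mapQ, mkQ_map_self]
  obtain ⟨h, hh⟩ := hE.out _ hq (C.liftQ (LinearMap.toSpanSingleton R E x)
    fun t ht ↦ hx t (by simpa [C] using ht))
  refine ⟨h (Submodule.Quotient.mk 1), (mem_torsionBySet_iff _ _).mpr fun b ↦ ?_, ?_⟩
  · rw [← map_smul, ← Submodule.Quotient.mk_smul, smul_eq_mul, mul_one,
      (Submodule.Quotient.mk_eq_zero B).mpr b.2, map_zero]
  · calc r • h (Submodule.Quotient.mk 1)
        _ = h (C.mapQ B (LinearMap.mulRight R r) le_rfl (Submodule.Quotient.mk 1)) := by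
          rw [mapQ_apply, ← map_smul, ← Submodule.Quotient.mk_smul, smul_eq_mul, mul_one,
            LinearMap.mulRight_apply, one_mul]
        _ = x := (hh _).trans ((liftQ_apply _ _ _).trans (one_smul R x))

theorem rdInjectiveC_torsionBy (hE : Module.Injective R E) (r : R) :
    RDInjectiveC R (torsionBy R E r) := by
  intro K L _ _ _ _ f _ hrd g
  let rK := LinearMap.range (LinearMap.lsmul R K r)
  let rL := LinearMap.range (LinearMap.lsmul R L r)
  have hf : rK ≤ rL.comap f := by
    rintro _ ⟨k, rfl⟩
    exact ⟨f k, by simp⟩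
  have hq : Function.Injective (rK.mapQ rL f hf) := by
    rw [← LinearMap.ker_eq_bot, ker_mapQ, eq_bot_iff, map_le_iff_le_comap]
    rintro k ⟨y, hy⟩
    obtain ⟨k', rfl⟩ := hrd r k y hy.symm
    exact (Submodule.Quotient.mk_eq_zero rK).mpr
      (LinearMap.mem_range_self (LinearMap.lsmul R K r) k')
  have hg : rK ≤ LinearMap.ker ((torsionBy R E r).subtype ∘ₗ g) := by
    rintro _ ⟨k, rfl⟩
    simp
  obtain ⟨h, hh⟩ := hE.out _ hq (rK.liftQ _ hg)
  refine ⟨(h ∘ₗ rL.mkQ).codRestrict _ fun y ↦ ?_, LinearMap.ext fun k ↦ Subtype.ext ?_⟩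
  · have hy : (Submodule.Quotient.mk (r • y) : L ⧸ rL) = 0 :=
      (Submodule.Quotient.mk_eq_zero rL).mpr (LinearMap.mem_range_self _ y)
    rw [mem_torsionBy_iff, LinearMap.comp_apply, ← map_smul, ← map_smul, mkQ_apply, hy, map_zero]
  · simpa using hh (Submodule.Quotient.mk k)

end RDInjective

section Hull

variable {R : Type u} [CommRing R] {E : Type u} [AddCommGroup E] [Module R E] {A : Ideal R}

/-- The set `𝒜*`. -/
def maximalPrincipalIdeals (A : Ideal R) : Set (Ideal R) :=
  {I | (∃ r : R, I = Ideal.span {r}) ∧ I ≤ A ∧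
    ∀ J : Ideal R, (∃ r : R, J = Ideal.span {r}) → J ≤ A → I ≤ J → J = I}

variable (E A) in
def torsionBySetDiagonal :
    torsionBySet R E A →ₗ[R]
      ∀ I : maximalPrincipalIdeals A, torsionBySet R E ((I : Ideal R) : Set R) :=
  LinearMap.pi fun I ↦ inclusion (torsionBySet_le_torsionBySet_of_subset I.2.2.1)

@[simp]
theorem coe_torsionBySetDiagonal_apply (x : torsionBySet R E A) (I : maximalPrincipalIdeals A) :
    (torsionBySetDiagonal E A x I : E) = x :=
  rfl

theorem rdInjectiveC_pi_torsionBySet (hE : Module.Injective R E) :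
    RDInjectiveC R (∀ I : maximalPrincipalIdeals A, torsionBySet R E ((I : Ideal R) : Set R)) :=
  RDInjectiveC.pi fun I ↦ by
    obtain ⟨r, hr⟩ := I.2.1
    rw [hr, Ideal.span, torsionBySet_span_singleton_eq]
    exact rdInjectiveC_torsionBy hE r

variable [IsLocalRing R]

theorem wellFoundedGT_isPrincipal (hT : (maximalIdeal R).IsTNilpotent) :
    WellFoundedGT {I : Ideal R // I.IsPrincipal} := by
  rw [WellFoundedGT, isWellFounded_iff, RelEmbedding.wellFounded_iff_isEmpty]
  refine ⟨fun g ↦ ?_⟩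
  have hlt : ∀ n, g n < g (n + 1) := fun n ↦ g.map_rel_iff.mpr n.lt_succ_self
  choose b hb using fun n ↦ (g n).2.principal
  have hstep : ∀ n, ∃ c ∈ maximalIdeal R, b n = c * b (n + 1) := by
    intro n
    have hmem : b n ∈ R ∙ b (n + 1) :=
      hb (n + 1) ▸ (hlt n).le (hb n ▸ mem_span_singleton_self (b n))
    obtain ⟨c, hc⟩ := mem_span_singleton.mp hmem
    rw [smul_eq_mul] at hc
    refine ⟨c, (mem_maximalIdeal _).mpr fun hu ↦ (hlt n).ne (Subtype.ext ?_), hc.symm⟩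
    rw [hb, hb, ← hc]
    exact Ideal.span_singleton_mul_left_unit hu _
  choose c hc hbc using hstep
  have h0 := hT.eq_zero_of_eq_mul_succ hc hbc
  exact (hlt 0).ne (Subtype.ext (by rw [hb, hb, h0, h0]))

theorem exists_mem_maximalPrincipalIdeals_le (hT : (maximalIdeal R).IsTNilpotent) {b : R}
    (hb : b ∈ A) : ∃ I ∈ maximalPrincipalIdeals A, Ideal.span {b} ≤ I := by
  have := wellFoundedGT_isPrincipal hT
  obtain ⟨I, ⟨hIA, hbI⟩, hmax⟩ := wellFounded_gt.has_min
    {I : {I : Ideal R // I.IsPrincipal} | I.1 ≤ A ∧ Ideal.span {b} ≤ I.1}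
    ⟨⟨_, ⟨b, rfl⟩⟩, (Ideal.span_singleton_le_iff_mem A).mpr hb, le_rfl⟩
  refine ⟨I.1, ⟨I.2.principal, hIA, fun J ⟨r, hJ⟩ hJA hIJ ↦ ?_⟩, hbI⟩
  by_contra hne
  exact hmax ⟨J, ⟨r, hJ⟩⟩ ⟨hJA, hbI.trans hIJ⟩
    (lt_of_le_of_ne hIJ fun h ↦ hne (congrArg Subtype.val h).symm)

theorem torsionBySetDiagonal_injective (hT : (maximalIdeal R).IsTNilpotent) :
    Function.Injective (torsionBySetDiagonal E A) := by
  obtain ⟨I, hI, -⟩ := exists_mem_maximalPrincipalIdeals_le hT A.zero_mem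
  exact fun x y hxy ↦ Subtype.ext (by simpa using congrArg (fun z ↦ (z ⟨I, hI⟩ : E)) hxy)

theorem exists_eq_smul_of_torsionBySetDiagonal_eq_smul
    (hE : Module.Injective R E) (hT : (maximalIdeal R).IsTNilpotent) {r : R}
    {x : torsionBySet R E A}
    {y : ∀ I : maximalPrincipalIdeals A, torsionBySet R E ((I : Ideal R) : Set R)}
    (hxy : torsionBySetDiagonal E A x = r • y) : ∃ x', x = r • x' := by
  have hx : ∀ t, t * r ∈ A → t • (x : E) = 0 := by
    intro t ht
    obtain ⟨I, hI, htI⟩ := exists_mem_maximalPrincipalIdeals_le hT ht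
    have : (x : E) = r • (y ⟨I, hI⟩ : E) := by
      simpa using congrArg (fun z ↦ (z ⟨I, hI⟩ : E)) hxy
    rw [this, smul_smul]
    exact (mem_torsionBySet_iff _ _).mp (y ⟨I, hI⟩).2 ⟨_, htI (Ideal.mem_span_singleton_self _)⟩
  obtain ⟨e, he, hre⟩ := exists_mem_torsionBySet_smul_eq hE A hx
  exact ⟨⟨e, he⟩, Subtype.ext hre.symm⟩

theorem exists_mem_torsionBySet_smul_eq_of_ne (hE : Module.Injective R E)
    {I I₀ : Ideal R} (hI : I ∈ maximalPrincipalIdeals A) (hI₀ : I₀ ∈ maximalPrincipalIdeals A)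
    (hne : I ≠ I₀) {r₀ : R} (hr₀ : I₀ = Ideal.span {r₀}) {e : E}
    (he : ∀ q ∈ maximalIdeal R, q • e = 0) : ∃ y ∈ torsionBySet R E I, r₀ • y = e := by
  refine exists_mem_torsionBySet_smul_eq hE I fun t ht ↦ he t fun ht_unit ↦ hne ?_
  have hr₀I : r₀ ∈ I := (Ideal.unit_mul_mem_iff_mem I ht_unit).mp ht
  exact hI₀.2.2 I hI.1 hI.2.1 (hr₀ ▸ (Ideal.span_singleton_le_iff_mem I).mpr hr₀I)

theorem exists_forall_sub_smul_eq (hE : Module.Injective R E)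
    {w : ∀ I : maximalPrincipalIdeals A, torsionBySet R E ((I : Ideal R) : Set R)}
    (hw : ∀ q ∈ maximalIdeal R, q • w = 0) (I₀ : maximalPrincipalIdeals A) {r₀ : R}
    (hr₀ : (I₀ : Ideal R) = Ideal.span {r₀}) :
    ∃ Y : ∀ I : maximalPrincipalIdeals A, torsionBySet R E ((I : Ideal R) : Set R),
      ∀ I, (w I₀ : E) - r₀ • (Y I : E) = w I := by
  have hwI : ∀ I, ∀ q ∈ maximalIdeal R, q • (w I : E) = 0 := fun I q hq ↦ by
    simpa using congrArg (fun z ↦ (z I : E)) (hw q hq)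
  have : ∀ I : maximalPrincipalIdeals A,
      ∃ y ∈ torsionBySet R E ((I : Ideal R) : Set R), r₀ • y = (w I₀ : E) - w I := by
    intro I
    by_cases hII₀ : I = I₀
    · exact ⟨0, zero_mem _, by rw [hII₀, smul_zero, sub_self]⟩
    · exact exists_mem_torsionBySet_smul_eq_of_ne hE I.2 I₀.2 (Subtype.coe_ne_coe.mpr hII₀) hr₀
        fun q hq ↦ by rw [smul_sub, hwI I₀ q hq, hwI I q hq, sub_zero]
  choose Y hYI hY using this
  exact ⟨fun I ↦ ⟨Y I, hYI I⟩, fun I ↦ by rw [hY, sub_sub_cancel]⟩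

theorem eq_bot_of_inf_range_torsionBySetDiagonal_eq_bot (hE : Module.Injective R E)
    (hT : (maximalIdeal R).IsTNilpotent) (hA : A ≠ ⊤)
    (N : Submodule R (∀ I : maximalPrincipalIdeals A, torsionBySet R E ((I : Ideal R) : Set R)))
    (hN : N ⊓ LinearMap.range (torsionBySetDiagonal E A) = ⊥)
    (hrd : ∀ (r : R) (x : torsionBySet R E A)
      (y : (∀ I : maximalPrincipalIdeals A, torsionBySet R E ((I : Ideal R) : Set R)) ⧸ N),
        N.mkQ (torsionBySetDiagonal E A x) = r • y →
          ∃ x', N.mkQ (torsionBySetDiagonal E A x) = r • N.mkQ (torsionBySetDiagonal E A x')) :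
    N = ⊥ := by
  refine (Submodule.eq_bot_iff N).mpr fun n hn ↦ by_contra fun hn0 ↦ ?_
  obtain ⟨t, hw0, hw⟩ := hT.exists_smul_ne_zero_forall_smul_eq_zero hn0
  obtain ⟨I₀, hI₀⟩ := Function.ne_iff.mp hw0
  obtain ⟨r₀, hr₀⟩ := I₀.2.1
  have hx₀ : ((t • n) I₀ : E) ∈ torsionBySet R E A := (mem_torsionBySet_iff _ _).mpr fun a ↦ by
    simpa using congrArg (fun z ↦ (z I₀ : E)) (hw a (le_maximalIdeal hA a.2))
  obtain ⟨Y, hY⟩ := exists_forall_sub_smul_eq hE hw I₀ hr₀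
  have hdiag : torsionBySetDiagonal E A ⟨_, hx₀⟩ - r₀ • Y = t • n :=
    funext fun I ↦ Subtype.ext (hY I)
  obtain ⟨x', hx'⟩ := hrd r₀ ⟨_, hx₀⟩ (N.mkQ Y) (by
    rw [← map_smul, mkQ_apply, mkQ_apply, Submodule.Quotient.eq, hdiag]
    exact N.smul_mem t hn)
  have hmem : torsionBySetDiagonal E A (⟨_, hx₀⟩ - r₀ • x') ∈
      N ⊓ LinearMap.range (torsionBySetDiagonal E A) := by
    refine mem_inf.mpr ⟨?_, LinearMap.mem_range_self (torsionBySetDiagonal E A) _⟩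
    rw [map_sub, map_smul, ← Submodule.Quotient.eq, ← mkQ_apply, ← mkQ_apply, hx', map_smul]
  rw [hN, mem_bot, ← map_zero (torsionBySetDiagonal E A)] at hmem
  have hx₀x' := sub_eq_zero.mp (torsionBySetDiagonal_injective hT hmem)
  refine hI₀ (Subtype.ext ?_)
  have hr₀A : r₀ ∈ A := I₀.2.2.1 (hr₀ ▸ Ideal.mem_span_singleton_self r₀)
  simpa [(mem_torsionBySet_iff _ _).mp x'.2 ⟨r₀, hr₀A⟩] using congrArg Subtype.val hx₀x'

end Hull

theorem rdInjectiveHull_torsionBy_eq_prod_general (R : Type u) [CommRing R] [IsLocalRing R]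
    (hperf : ∀ (M : Type u) [AddCommGroup M] [Module R M],
      Module.Flat R M → Module.Projective R M)
    (E : Type u) [AddCommGroup E] [Module R E] (hE : Module.Injective R E)
    (A : Ideal R) (hA : A ≠ ⊤)
    (S : Set (Ideal R))
    (hS : S = {I : Ideal R | (∃ r : R, I = Ideal.span {r}) ∧ I ≤ A ∧
      ∀ J : Ideal R, (∃ r : R, J = Ideal.span {r}) → J ≤ A → I ≤ J → J = I}) :
    ∃ ψ : torsionBySet R E (A : Set R) →ₗ[R]
        (∀ I : S, torsionBySet R E ((I : Ideal R) : Set R)),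
      Function.Injective ψ ∧
      (∀ (r : R) (x : torsionBySet R E (A : Set R))
        (y : ∀ I : S, torsionBySet R E ((I : Ideal R) : Set R)),
          ψ x = r • y → ∃ x', x = r • x') ∧
      (∀ N : Submodule R (∀ I : S, torsionBySet R E ((I : Ideal R) : Set R)),
        N ⊓ LinearMap.range ψ = ⊥ →
        (∀ (r : R) (x : torsionBySet R E (A : Set R))
          (y : (∀ I : S, torsionBySet R E ((I : Ideal R) : Set R)) ⧸ N),
            N.mkQ (ψ x) = r • y → ∃ x', N.mkQ (ψ x) = r • N.mkQ (ψ x')) →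
        N = ⊥) ∧
      RDInjectiveC R (∀ I : S, torsionBySet R E ((I : Ideal R) : Set R)) := by
  subst hS
  have hT : (maximalIdeal R).IsTNilpotent := jacobson_eq_maximalIdeal (⊥ : Ideal R) bot_ne_top ▸
    isTNilpotent_jacobson_of_flat_projective hperf
  exact ⟨torsionBySetDiagonal E A, torsionBySetDiagonal_injective hT,
    fun _ _ _ ↦ exists_eq_smul_of_torsionBySetDiagonal_eq_smul hE hT,
    eq_bot_of_inf_range_torsionBySetDiagonal_eq_bot hE hT hA, rdInjectiveC_pi_torsionBySet hE⟩

/-- Let `R` be a commutative local perfect ring with maximal ideal `P`, `E` the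
injective hull of `R/P`, `A` a proper ideal of `R`, and `𝒜*` the set of maximal
elements among the principal ideals contained in `A`.  Then the RD-injective hull of
`E[A] = {e ∈ E | Ae = 0}` is the product `∏_{r* ∈ 𝒜*} E[r*]`: there is an embedding
of `E[A]` into the product as a relatively divisible, RD-essential submodule, and the
product is RD-injective. -/
theorem rdInjectiveHull_torsionBy_eq_prod (R : Type u) [CommRing R] [IsLocalRing R]
    (hperf : ∀ (M : Type u) [AddCommGroup M] [Module R M],
      Module.Flat R M → Module.Projective R M)
    (E : Type u) [AddCommGroup E] [Module R E] (hE : Module.Injective R E)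
    (ι : (R ⧸ maximalIdeal R) →ₗ[R] E) (hι : Function.Injective ι)
    (hess : ∀ N : Submodule R E, N ⊓ LinearMap.range ι = ⊥ → N = ⊥)
    (A : Ideal R) (hA : A ≠ ⊤)
    (S : Set (Ideal R))
    (hS : S = {I : Ideal R | (∃ r : R, I = Ideal.span {r}) ∧ I ≤ A ∧
      ∀ J : Ideal R, (∃ r : R, J = Ideal.span {r}) → J ≤ A → I ≤ J → J = I}) :
    ∃ ψ : torsionBySet R E (A : Set R) →ₗ[R]
        (∀ I : S, torsionBySet R E ((I : Ideal R) : Set R)),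
      Function.Injective ψ ∧
      (∀ (r : R) (x : torsionBySet R E (A : Set R))
        (y : ∀ I : S, torsionBySet R E ((I : Ideal R) : Set R)),
          ψ x = r • y → ∃ x', x = r • x') ∧
      (∀ N : Submodule R (∀ I : S, torsionBySet R E ((I : Ideal R) : Set R)),
        N ⊓ LinearMap.range ψ = ⊥ →
        (∀ (r : R) (x : torsionBySet R E (A : Set R))
          (y : (∀ I : S, torsionBySet R E ((I : Ideal R) : Set R)) ⧸ N),
            N.mkQ (ψ x) = r • y → ∃ x', N.mkQ (ψ x) = r • N.mkQ (ψ x')) →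
        N = ⊥) ∧
      RDInjectiveC R (∀ I : S, torsionBySet R E ((I : Ideal R) : Set R)) :=
  rdInjectiveHull_torsionBy_eq_prod_general R hperf E hE A hA S hS
end

section
/- Let R be a commutative local ring with maximal ideal P satisfying the ascending chain condition on principal ideals. Then R is a valuation ring if and only if the simple module R/P is RD-injective. -/
universe u

open MulOpposite

open IsLocalRing

section RDAux

open IsLocalRing

lemma rd_forward (R : Type u) [CommRing R] [IsLocalRing R]
    (hch : ∀ I J : Ideal R, I ≤ J ∨ J ≤ I)
    (K L : Type u) [AddCommGroup K] [Module R K] [AddCommGroup L] [Module R L]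
    (f : K →ₗ[R] L) (hfinj : Function.Injective f)
    (hRD : ∀ (r : R) (k : K) (y : L), f k = r • y → ∃ k' : K, k = r • k')
    (g : K →ₗ[R] R ⧸ maximalIdeal R) :
    ∃ h : L →ₗ[R] R ⧸ maximalIdeal R, h.comp f = g := by
  let 𝔪 := maximalIdeal R
  let M : Submodule R L := 𝔪 • ⊤
  have hA : ∀ z ∈ M, ∃ p ∈ 𝔪, ∃ y : L, z = p • y := by
    intro z hz
    refine Submodule.smul_induction_on hz ?_ ?_
    · intro r hr n _; exact ⟨r, hr, n, rfl⟩
    · rintro x y ⟨p, hp, xx, rfl⟩ ⟨q, hq, yy, rfl⟩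
      rcases hch (Ideal.span {p}) (Ideal.span {q}) with h | h
      · obtain ⟨c, hc⟩ := Ideal.mem_span_singleton.mp (h (Ideal.mem_span_singleton_self p))
        refine ⟨q, hq, c • xx + yy, ?_⟩
        rw [smul_add, ← mul_smul, ← hc]
      · obtain ⟨c, hc⟩ := Ideal.mem_span_singleton.mp (h (Ideal.mem_span_singleton_self q))
        refine ⟨p, hp, xx + c • yy, ?_⟩
        rw [smul_add, ← mul_smul, ← hc]
  have hkill : ∀ p ∈ 𝔪, ∀ z : R ⧸ 𝔪, p • z = 0 := by
    intro p hp z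
    obtain ⟨c, rfl⟩ := Submodule.Quotient.mk_surjective 𝔪 z
    rw [← Submodule.Quotient.mk_smul, Submodule.Quotient.mk_eq_zero]
    rw [smul_eq_mul]
    exact Ideal.mul_mem_right c _ hp
  have hB : ∀ k : K, f k ∈ M → g k = 0 := by
    intro k hk
    obtain ⟨p, hp, y, hy⟩ := hA _ hk
    obtain ⟨k', rfl⟩ := hRD p k y hy
    rw [map_smul]; exact hkill p hp _
  let q : K →ₗ[R] L ⧸ M := M.mkQ.comp f
  have hle : LinearMap.ker q ≤ LinearMap.ker g := by
    intro k hk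
    rw [LinearMap.mem_ker] at hk ⊢
    apply hB
    have : M.mkQ (f k) = 0 := hk
    rwa [Submodule.mkQ_apply, Submodule.Quotient.mk_eq_zero] at this
  have htor : Module.IsTorsionBySet R (L ⧸ M) (𝔪 : Set R) := by
    rintro x ⟨p, hp⟩
    obtain ⟨y, rfl⟩ := Submodule.Quotient.mk_surjective M x
    rw [← Submodule.Quotient.mk_smul, Submodule.Quotient.mk_eq_zero]
    exact Submodule.smul_mem_smul hp trivial
  letI : Module (R ⧸ 𝔪) (L ⧸ M) := htor.module
  letI : Field (R ⧸ 𝔪) := Ideal.Quotient.field 𝔪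
  have hsc : ∀ (r : R) (z : R ⧸ 𝔪), r • z = Ideal.Quotient.mk 𝔪 r * z := by
    intro r z
    obtain ⟨c, rfl⟩ := Ideal.Quotient.mk_surjective z
    rw [← map_mul]
    exact (Submodule.Quotient.mk_smul 𝔪 r c).symm
  -- range of q as a (R ⧸ 𝔪)-submodule
  let W : Submodule (R ⧸ 𝔪) (L ⧸ M) :=
    { carrier := Set.range q
      add_mem' := by rintro _ _ ⟨k₁, rfl⟩ ⟨k₂, rfl⟩; exact ⟨k₁ + k₂, map_add q k₁ k₂⟩
      zero_mem' := ⟨0, map_zero q⟩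
      smul_mem' := by
        rintro c _ ⟨k, rfl⟩
        obtain ⟨r, rfl⟩ := Ideal.Quotient.mk_surjective c
        have hmk : (Ideal.Quotient.mk 𝔪 r) • (q k) = r • (q k) := rfl
        rw [hmk]
        exact ⟨r • k, map_smul q r k⟩ }
  let e := LinearMap.quotKerEquivRange q
  let ghat : (K ⧸ LinearMap.ker q) →ₗ[R] R ⧸ 𝔪 := Submodule.liftQ (LinearMap.ker q) g hle
  let φR : LinearMap.range q →ₗ[R] R ⧸ 𝔪 := ghat.comp (e.symm : LinearMap.range q →ₗ[R] _)
  have hφR : ∀ k : K, φR ⟨q k, LinearMap.mem_range_self q k⟩ = g k := by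
    intro k
    have h1 : e.symm ⟨q k, LinearMap.mem_range_self q k⟩ = Submodule.Quotient.mk k :=
      LinearMap.quotKerEquivRange_symm_apply_image q k (LinearMap.mem_range_self q k)
    show ghat (e.symm ⟨q k, LinearMap.mem_range_self q k⟩) = g k
    rw [h1]
    exact Submodule.liftQ_apply _ g k
  let φ : W →ₗ[R ⧸ 𝔪] R ⧸ 𝔪 :=
    { toFun := fun w => φR ⟨w.1, w.2⟩
      map_add' := by intro x y; exact map_add φR ⟨x.1, x.2⟩ ⟨y.1, y.2⟩
      map_smul' := by
        intro c x
        obtain ⟨r, rfl⟩ := Ideal.Quotient.mk_surjective c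
        simp only [RingHom.id_apply]
        have h1 : (⟨((Ideal.Quotient.mk 𝔪 r • x : W) : L ⧸ M), (Ideal.Quotient.mk 𝔪 r • x : W).2⟩
            : LinearMap.range q) = r • (⟨x.1, x.2⟩ : LinearMap.range q) := Subtype.ext rfl
        show φR ⟨((Ideal.Quotient.mk 𝔪 r • x : W) : L ⧸ M), (Ideal.Quotient.mk 𝔪 r • x : W).2⟩
            = Ideal.Quotient.mk 𝔪 r • φR ⟨x.1, x.2⟩
        rw [h1, map_smul, smul_eq_mul]
        exact hsc r _ }
  obtain ⟨C, hC⟩ := Submodule.exists_isCompl W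
  let pr := Submodule.linearProjOfIsCompl W C hC
  let ψ := φ.comp pr
  have hψ : ∀ k : K, ψ (q k) = g k := by
    intro k
    have hmem : q k ∈ W := ⟨k, rfl⟩
    have h1 : pr (q k) = ⟨q k, hmem⟩ :=
      Submodule.linearProjOfIsCompl_apply_left hC ⟨q k, hmem⟩
    show φ (pr (q k)) = g k
    rw [h1]
    show φR ⟨q k, hmem⟩ = g k
    exact hφR k
  refine ⟨{ toFun := fun x => ψ (Submodule.Quotient.mk x)
            map_add' := by
              intro x y
              show ψ (Submodule.Quotient.mk (x + y)) = _
              rw [Submodule.Quotient.mk_add]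
              exact map_add ψ _ _
            map_smul' := by
              intro r x
              simp only [RingHom.id_apply]
              show ψ (Submodule.Quotient.mk (r • x)) = r • ψ (Submodule.Quotient.mk x)
              rw [Submodule.Quotient.mk_smul]
              have h1 : (r • Submodule.Quotient.mk x : L ⧸ M)
                  = (Ideal.Quotient.mk 𝔪 r) • (Submodule.Quotient.mk x : L ⧸ M) := rfl
              rw [h1, map_smul ψ, smul_eq_mul]
              exact (hsc r _).symm }, ?_⟩
  ext k
  exact hψ k

lemma rd_bad_notunit {R : Type u} [CommRing R] [IsLocalRing R] {a b : R}
    (hab : a ∉ Ideal.span {b} ∧ b ∉ Ideal.span {a}) : ¬IsUnit a ∧ ¬IsUnit b := by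
  constructor
  · intro ha
    exact hab.2 (Ideal.eq_top_of_isUnit_mem _ (Ideal.mem_span_singleton_self a) ha ▸
      Submodule.mem_top)
  · intro hb
    exact hab.1 (Ideal.eq_top_of_isUnit_mem _ (Ideal.mem_span_singleton_self b) hb ▸
      Submodule.mem_top)

/-- sub-step : a unit minus a nonunit is a unit in a local ring -/
lemma rd_unit_sub {R : Type u} [CommRing R] [IsLocalRing R] {s p : R}
    (hs : IsUnit s) (hp : ¬IsUnit p) : IsUnit (s - p) := by
  by_contra h
  have h1 : s - p ∈ maximalIdeal R := h
  have h2 : p ∈ maximalIdeal R := hp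
  have : s ∈ maximalIdeal R := by simpa using (maximalIdeal R).add_mem h1 h2
  exact this hs

/-- Existence of a "maximal" incomparable pair, from ACC on principal ideals. -/
lemma rd_exists_max_pair (R : Type u) [CommRing R] [IsLocalRing R]
    (hacc : ∀ f : ℕ → Ideal R, (∀ n, ∃ r : R, f n = Ideal.span {r}) →
      (∀ n, f n ≤ f (n + 1)) → ∃ N, ∀ n, N ≤ n → f n = f N)
    (a₀ b₀ : R) (h0 : a₀ ∉ Ideal.span {b₀} ∧ b₀ ∉ Ideal.span {a₀}) :
    ∃ a b : R, (a ∉ Ideal.span {b} ∧ b ∉ Ideal.span {a}) ∧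
      ∀ r u v : R, ¬IsUnit r → a = r * u → b = r * v → False := by
  by_contra hno
  push_neg at hno
  -- every bad pair is divisible, producing a strictly bigger bad pair
  have hstep : ∀ a b : R, (a ∉ Ideal.span {b} ∧ b ∉ Ideal.span {a}) →
      ∃ a' b' : R, (a' ∉ Ideal.span {b'} ∧ b' ∉ Ideal.span {a'}) ∧
        Ideal.span {a} < Ideal.span {a'} := by
    intro a b hab
    obtain ⟨r, u, v, hr, hau, hbv, -⟩ := hno a b ⟨hab.1, hab.2⟩
    refine ⟨u, v, ⟨?_, ?_⟩, ?_⟩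
    · intro h
      obtain ⟨c, hc⟩ := Ideal.mem_span_singleton.mp h
      exact hab.1 (Ideal.mem_span_singleton.mpr ⟨c, by rw [hau, hc, hbv]; ring⟩)
    · intro h
      obtain ⟨c, hc⟩ := Ideal.mem_span_singleton.mp h
      exact hab.2 (Ideal.mem_span_singleton.mpr ⟨c, by rw [hbv, hc, hau]; ring⟩)
    · constructor
      · exact Ideal.span_singleton_le_span_singleton.mpr ⟨r, by rw [hau]; ring⟩
      · intro hle
        obtain ⟨c, hc⟩ := Ideal.mem_span_singleton.mp (hle (Ideal.mem_span_singleton_self u))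
        have hthis : a = r * (a * c) := by rw [← hc, ← hau]
        have hz : a * (1 - r * c) = 0 := by linear_combination hthis
        have hu : IsUnit (1 - r * c) := by
          have : r * c ∈ maximalIdeal R := Ideal.mul_mem_right c _ hr
          exact rd_unit_sub isUnit_one this
        have ha0 : a = 0 := by
          obtain ⟨w, hw⟩ := hu.exists_right_inv
          calc a = a * ((1 - r * c) * w) := by rw [hw, mul_one]
          _ = a * (1 - r * c) * w := by ring
          _ = 0 := by rw [hz, zero_mul]
        exact hab.1 (ha0 ▸ Ideal.zero_mem _)
  choose step1 step2 hbad hlt using hstep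
  let F : ℕ → {p : R × R // p.1 ∉ Ideal.span {p.2} ∧ p.2 ∉ Ideal.span {p.1}} :=
    fun n => Nat.rec ⟨(a₀, b₀), h0⟩
      (fun _ p => ⟨(step1 p.1.1 p.1.2 p.2, step2 p.1.1 p.1.2 p.2), hbad p.1.1 p.1.2 p.2⟩) n
  have hFlt : ∀ n, Ideal.span {(F n).1.1} < Ideal.span {(F (n + 1)).1.1} :=
    fun n => hlt (F n).1.1 (F n).1.2 (F n).2
  obtain ⟨N, hN⟩ := hacc (fun n => Ideal.span {(F n).1.1}) (fun n => ⟨(F n).1.1, rfl⟩)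
    (fun n => (hFlt n).le)
  exact absurd (hN (N + 1) (Nat.le_succ N)) (ne_of_gt (hFlt N))

lemma rd_backward (R : Type u) [CommRing R] [IsLocalRing R] (a b : R)
    (hab : a ∉ Ideal.span {b} ∧ b ∉ Ideal.span {a})
    (hmax : ∀ r u v, ¬IsUnit r → a = r * u → b = r * v → False) :
    ¬ RDInjectiveC R (R ⧸ maximalIdeal R) := by
  intro hinj
  let 𝔪 := maximalIdeal R
  let Pa : Ideal R := Submodule.map (LinearMap.toSpanSingleton R R a) 𝔪
  let Pb : Ideal R := Submodule.map (LinearMap.toSpanSingleton R R b) 𝔪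
  let L := (R ⧸ Pa) × (R ⧸ Pb)
  let f₀ : R →ₗ[R] L :=
    LinearMap.prod (Pa.mkQ.comp (LinearMap.toSpanSingleton R R a))
      (Pb.mkQ.comp (LinearMap.toSpanSingleton R R b))
  let A := LinearMap.ker f₀
  let K := R ⧸ A
  let f : K →ₗ[R] L := A.liftQ f₀ le_rfl
  have hfmk : ∀ s : R, f (Submodule.Quotient.mk s)
      = (Submodule.Quotient.mk (s * a), Submodule.Quotient.mk (s * b)) := by
    intro s
    rfl
  have hfinj : Function.Injective f := by
    rw [← LinearMap.ker_eq_bot]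
    exact Submodule.ker_liftQ_eq_bot _ _ _ le_rfl
  -- auxiliary: membership in Pa
  have hPa : ∀ x : R, x ∈ Pa ↔ ∃ p, ¬IsUnit p ∧ p * a = x := by
    intro x
    constructor
    · rintro ⟨p, hp, rfl⟩
      exact ⟨p, hp, rfl⟩
    · rintro ⟨p, hp, rfl⟩
      exact ⟨p, hp, rfl⟩
  have hPb : ∀ x : R, x ∈ Pb ↔ ∃ p, ¬IsUnit p ∧ p * b = x := by
    intro x
    constructor
    · rintro ⟨p, hp, rfl⟩
      exact ⟨p, hp, rfl⟩
    · rintro ⟨p, hp, rfl⟩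
      exact ⟨p, hp, rfl⟩
  -- a nonunit s is in A
  have hsA : ∀ s : R, ¬IsUnit s → s ∈ A := by
    intro s hs
    have h1 : s * a ∈ Pa := (hPa _).mpr ⟨s, hs, rfl⟩
    have h2 : s * b ∈ Pb := (hPb _).mpr ⟨s, hs, rfl⟩
    show f₀ s = 0
    have := hfmk s
    rw [show f₀ s = f (Submodule.Quotient.mk s) from rfl, this, Prod.mk_eq_zero]
    exact ⟨(Submodule.Quotient.mk_eq_zero Pa).mpr h1, (Submodule.Quotient.mk_eq_zero Pb).mpr h2⟩
  -- RD property
  have hRD : ∀ (r : R) (k : K) (y : L), f k = r • y → ∃ k' : K, k = r • k' := by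
    intro r k y hky
    obtain ⟨s, rfl⟩ := Submodule.Quotient.mk_surjective A k
    by_cases hr : IsUnit r
    · obtain ⟨w, hw⟩ := hr.exists_right_inv
      refine ⟨Submodule.Quotient.mk (w * s), ?_⟩
      rw [← Submodule.Quotient.mk_smul]
      congr 1
      rw [smul_eq_mul, ← mul_assoc, hw, one_mul]
    · by_cases hs : IsUnit s
      · exfalso
        obtain ⟨y₁, y₂⟩ := y
        obtain ⟨u', rfl⟩ := Submodule.Quotient.mk_surjective Pa y₁
        obtain ⟨v', rfl⟩ := Submodule.Quotient.mk_surjective Pb y₂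
        rw [hfmk, Prod.smul_mk, Prod.mk.injEq] at hky
        obtain ⟨hky1, hky2⟩ := hky
        have h1 : s * a - r * u' ∈ Pa := by
          rw [← Submodule.Quotient.mk_smul, smul_eq_mul] at hky1
          have h0 := sub_eq_zero.mpr hky1
          rwa [← Submodule.Quotient.mk_sub, Submodule.Quotient.mk_eq_zero] at h0
        have h2 : s * b - r * v' ∈ Pb := by
          rw [← Submodule.Quotient.mk_smul, smul_eq_mul] at hky2
          have h0 := sub_eq_zero.mpr hky2
          rwa [← Submodule.Quotient.mk_sub, Submodule.Quotient.mk_eq_zero] at h0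
        obtain ⟨p, hp, hpa⟩ := (hPa _).mp h1
        obtain ⟨p', hp', hpb⟩ := (hPb _).mp h2
        -- (s - p) * a = r * u', s - p unit
        have hsp : IsUnit (s - p) := rd_unit_sub hs hp
        have hsp' : IsUnit (s - p') := rd_unit_sub hs hp'
        obtain ⟨c, hc⟩ := hsp.exists_right_inv
        obtain ⟨c', hc'⟩ := hsp'.exists_right_inv
        have ha : a = r * (c * u') := by
          have h3 : (s - p) * a = r * u' := by rw [sub_mul, hpa]; ring
          calc a = ((s - p) * c) * a := by rw [hc, one_mul]
          _ = c * ((s - p) * a) := by ring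
          _ = c * (r * u') := by rw [h3]
          _ = r * (c * u') := by ring
        have hb : b = r * (c' * v') := by
          have h3 : (s - p') * b = r * v' := by rw [sub_mul, hpb]; ring
          calc b = ((s - p') * c') * b := by rw [hc', one_mul]
          _ = c' * ((s - p') * b) := by ring
          _ = c' * (r * v') := by rw [h3]
          _ = r * (c' * v') := by ring
        exact hmax r _ _ hr ha hb
      · refine ⟨0, ?_⟩
        rw [smul_zero]
        exact (Submodule.Quotient.mk_eq_zero A).mpr (hsA s hs)
  -- A ≤ 𝔪
  have hAm : A ≤ 𝔪 := by
    intro s hsk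
    by_contra hs
    have hs' : IsUnit s := by
      by_contra h
      exact hs ((IsLocalRing.mem_maximalIdeal s).mpr h)
    have h0 : f₀ s = 0 := hsk
    have h1 : s * a ∈ Pa := by
      have h2 : (f₀ s).1 = 0 := by rw [h0]; rfl
      have h3 : Submodule.Quotient.mk (s * a) = (0 : R ⧸ Pa) := h2
      rwa [Submodule.Quotient.mk_eq_zero] at h3
    obtain ⟨p, hp, hpa⟩ := (hPa _).mp h1
    have hsp : IsUnit (s - p) := rd_unit_sub hs' hp
    have hz : (s - p) * a = 0 := by rw [sub_mul, hpa, sub_self]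
    obtain ⟨c, hc⟩ := hsp.exists_right_inv
    have ha0 : a = 0 := by
      calc a = ((s - p) * c) * a := by rw [hc, one_mul]
      _ = c * ((s - p) * a) := by ring
      _ = 0 := by rw [hz, mul_zero]
    exact hab.1 (ha0 ▸ Ideal.zero_mem _)
  let g : K →ₗ[R] R ⧸ 𝔪 := A.liftQ 𝔪.mkQ (by rwa [Submodule.ker_mkQ])
  obtain ⟨h, hh⟩ := hinj K L f hfinj hRD g
  have hkill : ∀ p : R, ¬IsUnit p → ∀ z : R ⧸ 𝔪, p • z = 0 := by
    intro p hp z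
    obtain ⟨c, rfl⟩ := Submodule.Quotient.mk_surjective 𝔪 z
    rw [← Submodule.Quotient.mk_smul, Submodule.Quotient.mk_eq_zero, smul_eq_mul]
    exact Ideal.mul_mem_right c _ hp
  have heval := LinearMap.congr_fun hh (Submodule.Quotient.mk (1 : R))
  rw [LinearMap.comp_apply] at heval
  have hlhs : h (f (Submodule.Quotient.mk (1 : R))) = 0 := by
    rw [hfmk, one_mul, one_mul]
    have hsplit : ((Submodule.Quotient.mk a : R ⧸ Pa), (Submodule.Quotient.mk b : R ⧸ Pb))
        = a • ((Submodule.Quotient.mk 1 : R ⧸ Pa), (0 : R ⧸ Pb))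
          + b • ((0 : R ⧸ Pa), (Submodule.Quotient.mk 1 : R ⧸ Pb)) := by
      rw [Prod.smul_mk, Prod.smul_mk, Prod.mk_add_mk, smul_zero, smul_zero,
        ← Submodule.Quotient.mk_smul, ← Submodule.Quotient.mk_smul,
        smul_eq_mul, mul_one, smul_eq_mul, mul_one, add_zero, zero_add]
    rw [hsplit, map_add, map_smul, map_smul,
      hkill a (rd_bad_notunit hab).1 _, hkill b (rd_bad_notunit hab).2 _, add_zero]
  rw [hlhs] at heval
  have hg1 : g (Submodule.Quotient.mk (1 : R)) = Submodule.Quotient.mk (1 : R) := by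
    show 𝔪.mkQ 1 = _
    rfl
  rw [hg1] at heval
  have : (1 : R) ∈ 𝔪 := (Submodule.Quotient.mk_eq_zero 𝔪).mp heval.symm
  exact this isUnit_one

end RDAux


/-- Let `R` be a commutative local ring with maximal ideal `P` satisfying the
ascending chain condition on principal ideals.  Then `R` is a valuation ring (its
ideals are totally ordered) if and only if the simple module `R/P` is RD-injective. -/
theorem valuation_iff_residue_rdInjective (R : Type u) [CommRing R] [IsLocalRing R]
    (hacc : ∀ f : ℕ → Ideal R, (∀ n, ∃ r : R, f n = Ideal.span {r}) →
      (∀ n, f n ≤ f (n + 1)) → ∃ N, ∀ n, N ≤ n → f n = f N) :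
    (∀ I J : Ideal R, I ≤ J ∨ J ≤ I) ↔
      RDInjectiveC R (R ⧸ maximalIdeal R) := by
  constructor
  · intro hch K L _ _ _ _ f hfinj hRD g
    exact rd_forward R hch K L f hfinj hRD g
  · intro hinj I J
    by_contra hc
    push_neg at hc
    obtain ⟨a, haI, haJ⟩ := SetLike.not_le_iff_exists.mp hc.1
    obtain ⟨b, hbJ, hbI⟩ := SetLike.not_le_iff_exists.mp hc.2
    have hbad : a ∉ Ideal.span {b} ∧ b ∉ Ideal.span {a} := by
      constructor
      · intro h
        exact haJ ((Ideal.span_singleton_le_iff_mem J).mpr hbJ h)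
      · intro h
        exact hbI ((Ideal.span_singleton_le_iff_mem I).mpr haI h)
    obtain ⟨a', b', hbad', hmax'⟩ := rd_exists_max_pair R hacc a b hbad
    exact rd_backward R a' b' hbad' hmax' hinj
end
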